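/- arXiv:2012.12582 — 15 statements merged into one kernel-verified Lean document; each statement's English description precedes it below -/
import Mathlib

section
/- Let n > 1 and let f : Fin n × Fin n → Fin n × Fin n be a bijection that preserves rook-graph adjacency, i.e. for all vertices u, v, u and v are adjacent if and only if f(u) and f(v) are adjacent. Then there exist permutations σ, τ of Fin n such that either f(i,j) = (σ i, τ j) for all i, j, or f(i,j) = (σ j, τ i) for all i, j. -/
/-- Rook-graph adjacency on the `n × n` grid: two distinct cells are adjacent
iff they share a row or a column. -/
def RookAdj {n : ℕ} (u v : Fin n × Fin n) : Prop :=
  u ≠ v ∧ (u.1 = v.1 ∨ u.2 = v.2)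

namespace RookAux

variable {n : ℕ}

lemma rookAdj_swap (u v : Fin n × Fin n) :
    RookAdj ((u.2, u.1) : Fin n × Fin n) (v.2, v.1) ↔ RookAdj u v := by
  unfold RookAdj
  simp only [ne_eq, Prod.ext_iff, Prod.fst, Prod.snd]
  tauto

lemma zero_ne_one [NeZero n] (hn : 1 < n) : (0 : Fin n) ≠ 1 := by
  intro h
  have := congrArg Fin.val h
  simp [Fin.val_one'] at this
  omega

/-- The image of each row under `f` lies in a single row or a single column. -/
lemma rowLine [NeZero n] (hn : 1 < n) (f : Fin n × Fin n → Fin n × Fin n)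
    (hinj : Function.Injective f)
    (hadj : ∀ u v, RookAdj u v ↔ RookAdj (f u) (f v)) (i : Fin n) :
    (∀ j, (f (i, j)).1 = (f (i, 0)).1) ∨ (∀ j, (f (i, j)).2 = (f (i, 0)).2) := by
  have h01 : (0 : Fin n) ≠ 1 := zero_ne_one hn
  set u := f (i, 0) with hu
  set v := f (i, 1) with hv
  have huv : u ≠ v := by
    intro h
    exact h01 (congrArg Prod.snd (hinj h))
  have hA : RookAdj u v := by
    refine (hadj _ _).mp ⟨?_, Or.inl rfl⟩
    intro h
    exact h01 ((Prod.ext_iff.mp h).2)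
  -- helper facts for a generic j with f (i,j) ∉ {u, v}
  have key : ∀ j, f (i, j) ≠ u → f (i, j) ≠ v →
      RookAdj (f (i, j)) u ∧ RookAdj (f (i, j)) v := by
    intro j hju hjv
    constructor
    · refine (hadj _ _).mp ⟨?_, Or.inl rfl⟩
      intro h; exact hju (congrArg f h)
    · refine (hadj _ _).mp ⟨?_, Or.inl rfl⟩
      intro h; exact hjv (congrArg f h)
  rcases hA.2 with h | h
  · left
    intro j
    by_cases hju : f (i, j) = u
    · rw [hju]
    by_cases hjv : f (i, j) = v
    · rw [hjv, h]
    obtain ⟨a0, a1⟩ := key j hju hjv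
    rcases a0.2 with h0 | h0
    · exact h0
    rcases a1.2 with h1 | h1
    · rw [h1, h]
    · exact absurd (Prod.ext h (h0.symm.trans h1)) huv
  · right
    intro j
    by_cases hju : f (i, j) = u
    · rw [hju]
    by_cases hjv : f (i, j) = v
    · rw [hjv, h]
    obtain ⟨a0, a1⟩ := key j hju hjv
    rcases a0.2 with h0 | h0
    swap
    · exact h0
    rcases a1.2 with h1 | h1
    swap
    · rw [h1, h]
    · exact absurd (Prod.ext (h0.symm.trans h1) h) huv

/-- The image of each column under `f` lies in a single row or a single column. -/
lemma colLine [NeZero n] (hn : 1 < n) (f : Fin n × Fin n → Fin n × Fin n)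
    (hinj : Function.Injective f)
    (hadj : ∀ u v, RookAdj u v ↔ RookAdj (f u) (f v)) (j : Fin n) :
    (∀ k, (f (k, j)).1 = (f (0, j)).1) ∨ (∀ k, (f (k, j)).2 = (f (0, j)).2) := by
  have hg : Function.Injective (fun p : Fin n × Fin n => f (p.2, p.1)) := by
    intro a b hab
    have := hinj hab
    have := Prod.ext_iff.mp this
    exact Prod.ext this.2 this.1
  have hgadj : ∀ u v, RookAdj u v ↔
      RookAdj ((fun p : Fin n × Fin n => f (p.2, p.1)) u)
        ((fun p : Fin n × Fin n => f (p.2, p.1)) v) := by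
    intro u v
    rw [← rookAdj_swap u v]
    exact hadj (u.2, u.1) (v.2, v.1)
  exact rowLine hn _ hg hgadj j

/-- Main auxiliary lemma: if row 0 maps into a row, then `f` is a product map. -/
lemma aux [NeZero n] (hn : 1 < n) (f : Fin n × Fin n → Fin n × Fin n)
    (hinj : Function.Injective f)
    (hadj : ∀ u v, RookAdj u v ↔ RookAdj (f u) (f v))
    (h0 : ∀ j, (f ((0 : Fin n), j)).1 = (f (0, 0)).1) :
    ∃ σ τ : Equiv.Perm (Fin n), ∀ i j : Fin n, f (i, j) = (σ i, τ j) := by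
  have h01 : (0 : Fin n) ≠ 1 := zero_ne_one hn
  -- every column maps into a single column
  have colC : ∀ j k, (f (k, j)).2 = (f (0, j)).2 := by
    intro j
    rcases colLine hn f hinj hadj j with hc | hc
    · exfalso
      set j' : Fin n := if j = 0 then 1 else 0 with hj'
      have hjj' : j ≠ j' := by
        rcases eq_or_ne j 0 with h | h
        · subst h; simpa [hj'] using h01
        · intro he; rw [hj'] at he; simp [h] at he
      have hne : ((1 : Fin n), j) ≠ ((0 : Fin n), j') := by
        intro h
        exact h01 ((Prod.ext_iff.mp h).1).symm
      have hfadj : RookAdj (f (1, j)) (f (0, j')) := by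
        refine ⟨fun h => hne (hinj h), Or.inl ?_⟩
        rw [hc 1, hc 0, h0 j, ← h0 j']
      have := (hadj _ _).mpr hfadj
      rcases this.2 with h | h
      · exact h01 h.symm
      · exact hjj' h
    · exact fun k => hc k
  -- every row maps into a single row
  have rowR : ∀ i j, (f (i, j)).1 = (f (i, 0)).1 := by
    intro i
    rcases rowLine hn f hinj hadj i with h | h
    · exact h
    · exfalso
      have e1 : (f ((0:Fin n), 1)).2 = (f (0, 0)).2 := by
        rw [← colC 1 i]
        rw [h 1, ← h 0]
        exact colC 0 i
      have e2 : (f ((0:Fin n), 1)).1 = (f (0, 0)).1 := h0 1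
      have := hinj (Prod.ext e2 e1)
      exact h01 ((Prod.ext_iff.mp this).2).symm
  -- the two coordinate maps
  have hσinj : Function.Injective (fun i : Fin n => (f (i, 0)).1) := by
    intro i i' h
    have h2 : (f (i, 0)).2 = (f (i', 0)).2 := by
      rw [colC 0 i, colC 0 i']
    have := hinj (Prod.ext h h2)
    exact (Prod.ext_iff.mp this).1
  have hτinj : Function.Injective (fun j : Fin n => (f ((0:Fin n), j)).2) := by
    intro j j' h
    have h1 : (f ((0:Fin n), j)).1 = (f ((0:Fin n), j')).1 := by
      rw [h0 j, h0 j']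
    have := hinj (Prod.ext h1 h)
    exact (Prod.ext_iff.mp this).2
  refine ⟨Equiv.ofBijective _ ((Finite.injective_iff_bijective).mp hσinj),
    Equiv.ofBijective _ ((Finite.injective_iff_bijective).mp hτinj), ?_⟩
  intro i j
  exact Prod.ext (rowR i j) (colC j i)

end RookAux

theorem stmt_0 (n : ℕ) (hn : 1 < n) (f : Fin n × Fin n → Fin n × Fin n)
    (hf : Function.Bijective f)
    (hadj : ∀ u v : Fin n × Fin n, RookAdj u v ↔ RookAdj (f u) (f v)) :
    ∃ σ τ : Equiv.Perm (Fin n),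
      (∀ i j : Fin n, f (i, j) = (σ i, τ j)) ∨
      (∀ i j : Fin n, f (i, j) = (σ j, τ i)) := by
  haveI : NeZero n := ⟨by omega⟩
  have h01 : (0 : Fin n) ≠ 1 := RookAux.zero_ne_one hn
  have hinj := hf.injective
  rcases RookAux.rowLine hn f hinj hadj 0 with h | h
  · obtain ⟨σ, τ, hστ⟩ := RookAux.aux hn f hinj hadj h
    exact ⟨σ, τ, Or.inl hστ⟩
  · -- row 0 maps into a column; pass to the transpose
    set g : Fin n × Fin n → Fin n × Fin n := fun p => f (p.2, p.1) with hg
    have hginj : Function.Injective g := by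
      intro a b hab
      have := Prod.ext_iff.mp (hinj hab)
      exact Prod.ext this.2 this.1
    have hgadj : ∀ u v, RookAdj u v ↔ RookAdj (g u) (g v) := by
      intro u v
      rw [← RookAux.rookAdj_swap u v]
      exact hadj (u.2, u.1) (v.2, v.1)
    -- column 0 of f maps into a row
    have hcol : ∀ k, (f (k, (0:Fin n))).1 = (f (0, 0)).1 := by
      rcases RookAux.colLine hn f hinj hadj 0 with hc | hc
      · exact hc
      · exfalso
        have hne : f ((0:Fin n), 1) ≠ f (1, (0:Fin n)) := by
          intro he
          have := Prod.ext_iff.mp (hinj he)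
          exact h01 this.1
        have hfadj : RookAdj (f ((0:Fin n), 1)) (f (1, (0:Fin n))) := by
          refine ⟨hne, Or.inr ?_⟩
          rw [h 1, ← hc 0]
          exact (hc 1).symm
        have := (hadj _ _).mpr hfadj
        rcases this.2 with h' | h'
        · exact h01 h'
        · exact h01 h'.symm
    have hg0 : ∀ j, (g ((0:Fin n), j)).1 = (g (0, 0)).1 := fun k => hcol k
    obtain ⟨σ, τ, hστ⟩ := RookAux.aux hn g hginj hgadj hg0
    refine ⟨σ, τ, Or.inr fun i j => ?_⟩
    exact hστ j i
end

section
/- Let n > 1, let χ₁, χ₂ : Fin n × Fin n → Fin k be two colorings of the n×n grid, and suppose f : Fin n × Fin n → Fin n × Fin n is a bijection that preserves rook-graph adjacency (u and v are adjacent iff f(u) and f(v) are adjacent) and satisfies χ₂(f(x)) = χ₁(x) for all x. Then there exist permutations σ, τ of Fin n such that either χ₁(i,j) = χ₂(σ i, τ j) for all i, j, or χ₁(i,j) = χ₂(σ j, τ i) for all i, j. -/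
lemma rook_aux (n : ℕ) (hn : 1 < n) (f : Fin n × Fin n → Fin n × Fin n)
    (hinj : Function.Injective f)
    (hrowlike : ∀ a b b' : Fin n, (f (a,b)).1 = (f (a,b')).1)
    (hcoladj : ∀ a a' b : Fin n, a ≠ a' →
      (f (a,b)).1 = (f (a',b)).1 ∨ (f (a,b)).2 = (f (a',b)).2) :
    ∃ σ τ : Equiv.Perm (Fin n), ∀ a b : Fin n, f (a,b) = (σ a, τ b) := by
  have npos : 0 < n := by omega
  set z : Fin n := ⟨0, npos⟩ with hz
  have hsurj : ∀ a : Fin n, Function.Surjective (fun b => (f (a,b)).2) := by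
    intro a
    have hi : Function.Injective (fun b => (f (a,b)).2) := by
      intro b b' h
      have : f (a,b) = f (a,b') := Prod.ext_iff.mpr ⟨hrowlike a b b', h⟩
      exact (Prod.ext_iff.mp (hinj this)).2
    exact Finite.surjective_of_injective hi
  set ρ : Fin n → Fin n := fun a => (f (a,z)).1 with hρ
  have hρval : ∀ a b : Fin n, (f (a,b)).1 = ρ a := fun a b => hrowlike a b z
  have hρinj : Function.Injective ρ := by
    intro a a' h
    obtain ⟨b, hb⟩ := hsurj a ((f (a',z)).2)
    have : f (a,b) = f (a',z) :=
      Prod.ext_iff.mpr ⟨(hρval a b).trans (h.trans ((hρval a' z)).symm), hb⟩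
    exact (Prod.ext_iff.mp (hinj this)).1
  have hγconst : ∀ a a' b : Fin n, (f (a,b)).2 = (f (a',b)).2 := by
    intro a a' b
    by_cases h : a = a'
    · rw [h]
    · rcases hcoladj a a' b h with h1 | h2
      · exact absurd (hρinj ((hρval a b).symm.trans (h1.trans (hρval a' b)))) h
      · exact h2
  set γ : Fin n → Fin n := fun b => (f (z,b)).2 with hγ
  have hfab : ∀ a b : Fin n, f (a,b) = (ρ a, γ b) :=
    fun a b => Prod.ext_iff.mpr ⟨hρval a b, hγconst a z b⟩
  have hγinj : Function.Injective γ := by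
    intro b b' h
    have : f (z,b) = f (z,b') := by rw [hfab, hfab, h]
    exact (Prod.ext_iff.mp (hinj this)).2
  exact ⟨Equiv.ofBijective ρ (Finite.injective_iff_bijective.mp hρinj),
    Equiv.ofBijective γ (Finite.injective_iff_bijective.mp hγinj),
    fun a b => hfab a b⟩

theorem stmt_1 (n k : ℕ) (hn : 1 < n)
    (χ₁ χ₂ : Fin n × Fin n → Fin k)
    (f : Fin n × Fin n → Fin n × Fin n)
    (hf : Function.Bijective f)
    (hadj : ∀ u v : Fin n × Fin n, RookAdj u v ↔ RookAdj (f u) (f v))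
    (hcol : ∀ x : Fin n × Fin n, χ₂ (f x) = χ₁ x) :
    ∃ σ τ : Equiv.Perm (Fin n),
      (∀ i j : Fin n, χ₁ (i, j) = χ₂ (σ i, τ j)) ∨
      (∀ i j : Fin n, χ₁ (i, j) = χ₂ (σ j, τ i)) := by
  have hinj := hf.1
  have npos : 0 < n := by omega
  set z : Fin n := ⟨0, npos⟩ with hz
  have hrow : ∀ a b b' : Fin n, b ≠ b' →
      (f (a,b)).1 = (f (a,b')).1 ∨ (f (a,b)).2 = (f (a,b')).2 := by
    intro a b b' hbb
    have h : RookAdj (a,b) (a,b') := ⟨by simp [Prod.ext_iff, hbb], Or.inl rfl⟩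
    exact ((hadj _ _).mp h).2
  have hcolumn : ∀ a a' b : Fin n, a ≠ a' →
      (f (a,b)).1 = (f (a',b)).1 ∨ (f (a,b)).2 = (f (a',b)).2 := by
    intro a a' b haa
    have h : RookAdj (a,b) (a',b) := ⟨by simp [Prod.ext_iff, haa], Or.inr rfl⟩
    exact ((hadj _ _).mp h).2
  have dich : ∀ a : Fin n, (∀ b b' : Fin n, (f (a,b)).1 = (f (a,b')).1) ∨
      (∀ b b' : Fin n, (f (a,b)).2 = (f (a,b')).2) := by
    intro a
    by_cases H : ∀ b b' : Fin n, (f (a,b)).1 = (f (a,b')).1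
    · exact Or.inl H
    · right
      push_neg at H
      obtain ⟨b, b', hne⟩ := H
      have hbb' : b ≠ b' := fun h => hne (by rw [h])
      have h2 : (f (a,b)).2 = (f (a,b')).2 := (hrow a b b' hbb').resolve_left hne
      have key : ∀ b₁ : Fin n, (f (a,b₁)).2 = (f (a,b)).2 := by
        intro b₁
        by_cases e1 : b₁ = b
        · rw [e1]
        by_cases e2 : b₁ = b'
        · rw [e2, h2]
        rcases hrow a b₁ b e1 with hr | hc
        · rcases hrow a b₁ b' e2 with hr' | hc'
          · exact absurd (hr.symm.trans hr') hne
          · exact hc'.trans h2.symm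
        · exact hc
      intro b₁ b₂
      rw [key b₁, key b₂]
  have glob : (∀ a b b' : Fin n, (f (a,b)).1 = (f (a,b')).1) ∨
      (∀ a b b' : Fin n, (f (a,b)).2 = (f (a,b')).2) := by
    by_cases H : ∀ a b b' : Fin n, (f (a,b)).1 = (f (a,b')).1
    · exact Or.inl H
    · right
      push_neg at H
      obtain ⟨a₀, b₀, b₀', hne0⟩ := H
      have ha₀ : ∀ b b' : Fin n, (f (a₀,b)).2 = (f (a₀,b')).2 := by
        rcases dich a₀ with h | h
        · exact absurd (h b₀ b₀') hne0
        · exact h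
      intro a
      rcases dich a with h | h
      · exfalso
        by_cases haa : a = a₀
        · subst haa
          exact hne0 (h b₀ b₀')
        · have hia : Function.Injective (fun b => (f (a,b)).2) := by
            intro b b' hb
            have : f (a,b) = f (a,b') := Prod.ext_iff.mpr ⟨h b b', hb⟩
            exact (Prod.ext_iff.mp (hinj this)).2
          have hsa := Finite.surjective_of_injective hia
          have hia₀ : Function.Injective (fun b => (f (a₀,b)).1) := by
            intro b b' hb
            have : f (a₀,b) = f (a₀,b') := Prod.ext_iff.mpr ⟨hb, ha₀ b b'⟩
            exact (Prod.ext_iff.mp (hinj this)).2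
          have hsa₀ := Finite.surjective_of_injective hia₀
          obtain ⟨b, hb⟩ := hsa ((f (a₀,z)).2)
          obtain ⟨b', hb'⟩ := hsa₀ ((f (a,z)).1)
          have hb2 : (f (a,b)).2 = (f (a₀,z)).2 := hb
          have hb1 : (f (a₀,b')).1 = (f (a,z)).1 := hb'
          have : f (a,b) = f (a₀,b') :=
            Prod.ext_iff.mpr ⟨(h b z).trans hb1.symm, hb2.trans (ha₀ z b')⟩
          exact haa (Prod.ext_iff.mp (hinj this)).1
      · exact h
  rcases glob with H | H
  · obtain ⟨σ, τ, hστ⟩ := rook_aux n hn f hinj H hcolumn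
    refine ⟨σ, τ, Or.inl ?_⟩
    intro i j
    rw [← hcol (i,j), hστ i j]
  · set g : Fin n × Fin n → Fin n × Fin n := fun x => Prod.swap (f x) with hg
    have hginj : Function.Injective g :=
      Function.Injective.comp Prod.swap_injective hinj
    have hgrow : ∀ a b b' : Fin n, (g (a,b)).1 = (g (a,b')).1 := by
      intro a b b'
      simp only [hg, Prod.fst_swap]
      exact H a b b'
    have hgcol : ∀ a a' b : Fin n, a ≠ a' →
        (g (a,b)).1 = (g (a',b)).1 ∨ (g (a,b)).2 = (g (a',b)).2 := by
      intro a a' b haa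
      simp only [hg, Prod.fst_swap, Prod.snd_swap]
      exact (hcolumn a a' b haa).symm
    obtain ⟨σ, τ, hστ⟩ := rook_aux n hn g hginj hgrow hgcol
    refine ⟨τ, σ, Or.inr ?_⟩
    intro i j
    have hgij := hστ i j
    have hfij : f (i,j) = (τ j, σ i) := by
      have := congrArg Prod.swap hgij
      simpa [hg] using this
    rw [← hcol (i,j), hfij]
end

section
/- Let n > 1 and let f : Fin n × Fin n → Fin n × Fin n be a bijection that preserves rook-graph adjacency (u and v are adjacent iff f(u) and f(v) are adjacent). Suppose there exist an index i and distinct indices j ≠ q such that f(i,j) and f(i,q) have the same first coordinate (they lie in a common row). Then: (i) for all a, d, e, the images f(a,d) and f(a,e) have the same first coordinate, and (ii) for all d, a, b, the images f(a,d) and f(b,d) have the same second coordinate; i.e. f maps every row into a row and every column into a column. -/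
theorem stmt_2 (n : ℕ) (hn : 1 < n) (f : Fin n × Fin n → Fin n × Fin n)
    (hf : Function.Bijective f)
    (hadj : ∀ u v : Fin n × Fin n, RookAdj u v ↔ RookAdj (f u) (f v))
    (i j q : Fin n) (hjq : j ≠ q)
    (hrow : (f (i, j)).1 = (f (i, q)).1) :
    (∀ a d e : Fin n, (f (a, d)).1 = (f (a, e)).1) ∧
    (∀ d a b : Fin n, (f (a, d)).2 = (f (b, d)).2) := by
  have hinj := hf.injective
  haveI : Nontrivial (Fin n) := ⟨⟨⟨0, by omega⟩, ⟨1, hn⟩, by simp [Fin.ext_iff]⟩⟩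
  -- Step 1: row i maps into a single row.
  have hrowi : ∀ k, (f (i, k)).1 = (f (i, j)).1 := by
    intro k
    by_cases hkj : k = j
    · subst hkj; rfl
    by_cases hkq : k = q
    · subst hkq; exact hrow.symm
    have h1 : RookAdj (f (i, k)) (f (i, j)) :=
      (hadj _ _).mp ⟨by simp [Prod.ext_iff, hkj], Or.inl rfl⟩
    have h2 : RookAdj (f (i, k)) (f (i, q)) :=
      (hadj _ _).mp ⟨by simp [Prod.ext_iff, hkq], Or.inl rfl⟩
    rcases h1.2 with h | hc1
    · exact h
    rcases h2.2 with h | hc2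
    · exact h.trans hrow.symm
    exfalso
    have heq : f (i, j) = f (i, q) := Prod.ext hrow (hc1.symm.trans hc2)
    have := hinj heq
    simp [Prod.ext_iff] at this
    exact hjq this
  -- Step 2: columns map into columns.
  have hcol : ∀ d a, a ≠ i → (f (a, d)).2 = (f (i, d)).2 := by
    intro d a hai
    have hadj1 : RookAdj (f (a, d)) (f (i, d)) :=
      (hadj _ _).mp ⟨by simp [Prod.ext_iff, hai], Or.inr rfl⟩
    rcases hadj1.2 with h | h
    · exfalso
      obtain ⟨d', hd'⟩ := exists_ne d
      have hnon : ¬ RookAdj (f (a, d)) (f (i, d')) := by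
        rw [← hadj]
        rintro ⟨hne, h1 | h2⟩
        · exact hai h1
        · exact hd' h2.symm
      apply hnon
      constructor
      · intro heq
        have := hinj heq
        simp [Prod.ext_iff] at this
        exact hai this.1
      · left
        rw [h]
        exact (hrowi d).trans (hrowi d').symm
    · exact h
  have hcol2 : ∀ d a b : Fin n, (f (a, d)).2 = (f (b, d)).2 := by
    intro d a b
    have ha : (f (a, d)).2 = (f (i, d)).2 := by
      by_cases hai : a = i
      · rw [hai]
      · exact hcol d a hai
    have hb : (f (b, d)).2 = (f (i, d)).2 := by
      by_cases hbi : b = i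
      · rw [hbi]
      · exact hcol d b hbi
    exact ha.trans hb.symm
  refine ⟨?_, hcol2⟩
  intro a d e
  by_cases hde : d = e
  · subst hde; rfl
  have hadj1 : RookAdj (f (a, d)) (f (a, e)) :=
    (hadj _ _).mp ⟨by simp [Prod.ext_iff, hde], Or.inl rfl⟩
  rcases hadj1.2 with h | h
  · exact h
  exfalso
  have h2 : (f (i, d)).2 = (f (i, e)).2 := by
    rw [← hcol2 d a i, ← hcol2 e a i]
    exact h
  have heq : f (i, d) = f (i, e) := Prod.ext ((hrowi d).trans (hrowi e).symm) h2
  have := hinj heq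
  simp [Prod.ext_iff] at this
  exact hde this
end

section
/- Let k be a positive integer and let n satisfy k² < n < k² + k. Then there is no rectangle-free coloring χ : Fin n × Fin n → Fin k of the n×n grid with the shift pattern, i.e. no rectangle-free χ satisfying χ(i,j) = χ(0, (j − i) mod n) for all i, j < n. -/
/-- A coloring of a grid is rectangle-free if no four corners of an axis-aligned
rectangle get the same color. -/
def IsRectFree {α β γ : Type*} (χ : α × β → γ) : Prop :=
  ∀ i₁ i₂ : α, ∀ j₁ j₂ : β, i₁ ≠ i₂ → j₁ ≠ j₂ →
    ¬ (χ (i₁, j₁) = χ (i₁, j₂) ∧ χ (i₁, j₁) = χ (i₂, j₁) ∧ χ (i₁, j₁) = χ (i₂, j₂))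

theorem stmt_4 (k n : ℕ) (hk : 0 < k) (h1 : k ^ 2 < n) (h2 : n < k ^ 2 + k) :
    ¬ ∃ χ : Fin n × Fin n → Fin k, IsRectFree χ ∧
      ∀ i j : Fin n,
        χ (i, j) = χ (⟨0, Nat.lt_of_le_of_lt (Nat.zero_le _) h1⟩,
          ⟨(n + (j : ℕ) - (i : ℕ)) % n,
            Nat.mod_lt _ (Nat.lt_of_le_of_lt (Nat.zero_le _) h1)⟩) := by
  rintro ⟨χ, hrf, hshift⟩
  have hn : 0 < n := Nat.lt_of_le_of_lt (Nat.zero_le _) h1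
  haveI : NeZero n := ⟨hn.ne'⟩
  set toF : ZMod n → Fin n := fun x => ⟨x.val, x.val_lt⟩ with htoF
  set f : ZMod n → Fin k := fun x => χ (⟨0, hn⟩, toF x) with hf
  have hcast : ∀ x : ZMod n, ((toF x : ℕ) : ZMod n) = x := fun x =>
    ZMod.natCast_rightInverse x
  -- χ in terms of f
  have hfe : ∀ i j : Fin n, χ (i, j) = f (((j : ℕ) : ZMod n) - ((i : ℕ) : ZMod n)) := by
    intro i j
    have hle : (i : ℕ) ≤ n + (j : ℕ) := le_trans i.2.le (Nat.le_add_right _ _)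
    have hzz : (((n + (j : ℕ) - (i : ℕ) : ℕ)) : ZMod n) =
        ((j : ℕ) : ZMod n) - ((i : ℕ) : ZMod n) := by
      push_cast [Nat.cast_sub hle]
      rw [ZMod.natCast_self]
      ring
    have key : (⟨(n + (j : ℕ) - (i : ℕ)) % n,
        Nat.mod_lt _ (Nat.lt_of_le_of_lt (Nat.zero_le _) h1)⟩ : Fin n) =
        toF (((j : ℕ) : ZMod n) - ((i : ℕ) : ZMod n)) := by
      apply Fin.ext
      show (n + (j : ℕ) - (i : ℕ)) % n = (((j : ℕ) : ZMod n) - ((i : ℕ) : ZMod n)).val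
      rw [← hzz, ZMod.val_natCast]
    rw [hshift i j, key]
  -- rectangle-freeness for f
  have hrf' : ∀ d a b : ZMod n, d ≠ 0 → a ≠ b →
      ¬ (f a = f b ∧ f a = f (a - d) ∧ f a = f (b - d)) := by
    intro d a b hd hab ⟨e1, e2, e3⟩
    have hi : (⟨0, hn⟩ : Fin n) ≠ toF d := by
      intro h
      apply hd
      have := congrArg (fun x : Fin n => ((x : ℕ) : ZMod n)) h
      simpa [hcast d] using this.symm
    have hj : toF a ≠ toF b := by
      intro h
      apply hab
      have := congrArg (fun x : Fin n => ((x : ℕ) : ZMod n)) h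
      simpa [hcast a, hcast b] using this
    refine hrf ⟨0, hn⟩ (toF d) (toF a) (toF b) hi hj ?_
    have k1 : χ (⟨0, hn⟩, toF a) = f a := by rw [hfe]; simp [hcast a]
    have k2 : χ (⟨0, hn⟩, toF b) = f b := by rw [hfe]; simp [hcast b]
    have k3 : χ (toF d, toF a) = f (a - d) := by rw [hfe]; simp [hcast a, hcast d]
    have k4 : χ (toF d, toF b) = f (b - d) := by rw [hfe]; simp [hcast b, hcast d]
    exact ⟨k1.trans (e1.trans k2.symm), k1.trans (e2.trans k3.symm),
      k1.trans (e3.trans k4.symm)⟩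
  -- pigeonhole: some color appears ≥ k+1 times
  have hcard : Fintype.card (Fin k) * k < Fintype.card (ZMod n) := by
    rw [Fintype.card_fin, ZMod.card]
    nlinarith [sq_nonneg k]
  obtain ⟨c, hc⟩ := Fintype.exists_lt_card_fiber_of_mul_lt_card f hcard
  set S : Finset (ZMod n) := Finset.univ.filter fun x => f x = c with hS
  have hSc : ∀ x ∈ S, f x = c := fun x hx => (Finset.mem_filter.mp hx).2
  have hScard : k + 1 ≤ S.card := hc
  -- the difference map on off-diagonal pairs is injective
  have hinj : Set.InjOn (fun p : ZMod n × ZMod n => p.1 - p.2) ↑S.offDiag := by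
    rintro ⟨a, b⟩ hab ⟨a', b'⟩ hab' heq
    simp only [Finset.coe_offDiag, Set.mem_offDiag] at hab hab'
    obtain ⟨haS, hbS, hne⟩ := hab
    obtain ⟨haS', hbS', hne'⟩ := hab'
    simp only at heq
    by_contra hcon
    have haa' : a ≠ a' := by
      intro h; apply hcon; subst h
      rw [sub_right_inj.mp heq]
    have hd : a - b ≠ 0 := sub_ne_zero_of_ne hne
    apply hrf' (a - b) a a' hd haa'
    have h1 : a - (a - b) = b := by ring
    have h2 : a' - (a - b) = b' := by rw [heq]; ring
    rw [h1, h2, hSc a haS, hSc a' haS', hSc b hbS, hSc b' hbS']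
    exact ⟨rfl, rfl, rfl⟩
  have hmaps : ∀ p ∈ S.offDiag, (fun p : ZMod n × ZMod n => p.1 - p.2) p ∈
      (Finset.univ : Finset (ZMod n)).erase 0 := by
    rintro ⟨a, b⟩ hab
    rw [Finset.mem_offDiag] at hab
    exact Finset.mem_erase.mpr ⟨sub_ne_zero_of_ne hab.2.2, Finset.mem_univ _⟩
  have hle := Finset.card_le_card_of_injOn _ hmaps hinj
  rw [Finset.offDiag_card] at hle
  have hcard2 : ((Finset.univ : Finset (ZMod n)).erase 0).card = n - 1 := by
    rw [Finset.card_erase_of_mem (Finset.mem_univ _), Finset.card_univ, ZMod.card]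
  rw [hcard2] at hle
  have hmul : (k + 1) * k ≤ S.card * (S.card - 1) :=
    Nat.mul_le_mul hScard (by omega)
  have hmm : S.card * (S.card - 1) = S.card * S.card - S.card := by
    rw [Nat.mul_sub, Nat.mul_one]
  have h6 : (k + 1) * k ≤ n - 1 := by rw [hmm] at hmul; exact le_trans hmul hle
  have h7 : (k + 1) * k = k ^ 2 + k := by ring
  rw [h7] at h6
  exact absurd (h6.trans_lt ((Nat.sub_lt hn one_pos).trans h2)) (lt_irrefl _)
end

section
/- Let k and n be positive integers. If there exists a rectangle-free coloring χ : Fin n × Fin n → Fin k of the n×n grid with the shift pattern (χ(i,j) = χ(0, (j − i) mod n) for all i, j < n), then n ≤ k² or n ≥ k² + k. -/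
lemma mod_key_aux (n a b : ℕ) (ha : a < n) (hb : b < n) :
    (n + a - (n + a - b) % n) % n = b := by
  rcases le_or_gt b a with hba | hba
  · have h1 : (n + a - b) % n = a - b := by
      rw [Nat.add_sub_assoc hba, Nat.add_mod_left]
      exact Nat.mod_eq_of_lt (by omega)
    rw [h1]
    have h2 : n + a - (a - b) = n + b := by omega
    rw [h2, Nat.add_mod_left]
    exact Nat.mod_eq_of_lt hb
  · have h1 : (n + a - b) % n = n + a - b := Nat.mod_eq_of_lt (by omega)
    rw [h1]
    have h2 : n + a - (n + a - b) = b := by omega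
    rw [h2]
    exact Nat.mod_eq_of_lt hb

lemma mod_ne_aux (n a b : ℕ) (ha : a < n) (hb : b < n) (hab : a ≠ b) :
    (n + a - b) % n ≠ 0 := by
  rcases le_or_gt b a with hba | hba
  · have h1 : (n + a - b) % n = a - b := by
      rw [Nat.add_sub_assoc hba, Nat.add_mod_left]
      exact Nat.mod_eq_of_lt (by omega)
    omega
  · have h1 : (n + a - b) % n = n + a - b := Nat.mod_eq_of_lt (by omega)
    omega

theorem stmt_5 (k n : ℕ) (hk : 0 < k) (hn : 0 < n)
    (h : ∃ χ : Fin n × Fin n → Fin k, IsRectFree χ ∧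
      ∀ i j : Fin n,
        χ (i, j) = χ (⟨0, hn⟩, ⟨(n + (j : ℕ) - (i : ℕ)) % n, Nat.mod_lt _ hn⟩)) :
    n ≤ k ^ 2 ∨ k ^ 2 + k ≤ n := by
  obtain ⟨χ, hrf, hs⟩ := h
  rcases le_or_gt n (k ^ 2) with hle | hlt
  · exact Or.inl hle
  right
  set f : Fin n → Fin k := fun j => χ (⟨0, hn⟩, j) with hf
  -- pigeonhole: some color class has more than k elements
  have hmaps : ∀ a ∈ (Finset.univ : Finset (Fin n)), f a ∈ (Finset.univ : Finset (Fin k)) := by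
    simp
  have hcard : (Finset.univ : Finset (Fin k)).card * k < (Finset.univ : Finset (Fin n)).card := by
    simpa using by nlinarith [sq_nonneg k]
  obtain ⟨c, -, hc⟩ := Finset.exists_lt_card_fiber_of_mul_lt_card_of_maps_to hmaps hcard
  set S : Finset (Fin n) := Finset.univ.filter (fun x => f x = c) with hS
  -- the difference map on the off-diagonal of S is injective
  set g : Fin n × Fin n → Fin n :=
    fun p => (⟨(n + (p.1 : ℕ) - (p.2 : ℕ)) % n, Nat.mod_lt _ hn⟩ : Fin n) with hg
  have hrecover : ∀ p : Fin n × Fin n,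
      (⟨(n + (p.1 : ℕ) - ((g p : ℕ))) % n, Nat.mod_lt _ hn⟩ : Fin n) = p.2 := by
    intro p
    apply Fin.ext
    exact mod_key_aux n p.1 p.2 p.1.isLt p.2.isLt
  have hinj : Set.InjOn g ↑S.offDiag := by
    intro p hp q hq heq
    obtain ⟨hp1, hp2, hpne⟩ := Finset.mem_offDiag.1 (Finset.mem_coe.1 hp)
    obtain ⟨hq1, hq2, hqne⟩ := Finset.mem_offDiag.1 (Finset.mem_coe.1 hq)
    simp only [hS, Finset.mem_filter, Finset.mem_univ, true_and] at hp1 hp2 hq1 hq2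
    have h1 : p.1 = q.1 := by
      by_contra hne
      have hd0 : ((g p : Fin n) : ℕ) ≠ 0 := by
        simpa [hg] using mod_ne_aux n p.1 p.2 p.1.isLt p.2.isLt (fun hh => hpne (Fin.ext hh))
      refine hrf ⟨0, hn⟩ (g p) p.1 q.1 ?_ hne ⟨?_, ?_, ?_⟩
      · intro hh
        exact hd0 (by simpa using congrArg Fin.val hh.symm)
      · show χ (⟨0, hn⟩, p.1) = χ (⟨0, hn⟩, q.1)
        have : f p.1 = f q.1 := hp1.trans hq1.symm
        simpa [hf] using this
      · show χ (⟨0, hn⟩, p.1) = χ (g p, p.1)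
        rw [hs (g p) p.1]
        have : f p.1 = f p.2 := hp1.trans hp2.symm
        have h2 := hrecover p
        simp only [hf] at this
        rw [show (⟨(n + (p.1 : ℕ) - ((g p : Fin n) : ℕ)) % n, Nat.mod_lt _ hn⟩ : Fin n) = p.2
          from h2]
        exact this
      · show χ (⟨0, hn⟩, p.1) = χ (g p, q.1)
        rw [hs (g p) q.1]
        have hgq : (⟨(n + (q.1 : ℕ) - ((g p : Fin n) : ℕ)) % n, Nat.mod_lt _ hn⟩ : Fin n) = q.2 := by
          rw [heq]; exact hrecover q
        rw [hgq]
        have : f p.1 = f q.2 := hp1.trans hq2.symm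
        simpa [hf] using this
    have h2 : p.2 = q.2 := by
      have := (hrecover p).symm.trans ((by rw [heq, h1] : (⟨(n + (p.1 : ℕ) - ((g p : Fin n) : ℕ)) % n, Nat.mod_lt _ hn⟩ : Fin n) = ⟨(n + (q.1 : ℕ) - ((g q : Fin n) : ℕ)) % n, Nat.mod_lt _ hn⟩).trans (hrecover q))
      exact this
    exact Prod.ext h1 h2
  -- the image avoids 0
  have hmaps2 : ∀ p ∈ S.offDiag, g p ∈ (Finset.univ : Finset (Fin n)).erase ⟨0, hn⟩ := by
    intro p hp
    simp only [hS, Finset.mem_offDiag, Finset.mem_filter, Finset.mem_univ, true_and] at hp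
    obtain ⟨-, -, hpne⟩ := hp
    refine Finset.mem_erase.2 ⟨?_, Finset.mem_univ _⟩
    intro hh
    exact mod_ne_aux n p.1 p.2 p.1.isLt p.2.isLt (fun hh2 => hpne (Fin.ext hh2))
      (by simpa using congrArg Fin.val hh)
  have hcount := Finset.card_le_card_of_injOn g hmaps2 hinj
  rw [Finset.offDiag_card] at hcount
  have herase : ((Finset.univ : Finset (Fin n)).erase ⟨0, hn⟩).card = n - 1 := by
    rw [Finset.card_erase_of_mem (Finset.mem_univ _)]
    simp
  rw [herase] at hcount
  -- S.card ≥ k + 1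
  have hsk : k + 1 ≤ S.card := hc
  obtain ⟨t, ht⟩ : ∃ t, S.card = t + 1 := ⟨S.card - 1, by omega⟩
  have htk : k ≤ t := by omega
  have : (t + 1) * (t + 1) - (t + 1) ≤ n - 1 := by rw [← ht]; exact hcount
  have h3 : (t + 1) * t ≤ n - 1 := by
    have : (t + 1) * (t + 1) - (t + 1) = (t + 1) * t := by ring_nf; omega
    omega
  have h4 : (k + 1) * k ≤ (t + 1) * t := Nat.mul_le_mul (by omega) htk
  have : (k + 1) * k = k ^ 2 + k := by ring
  omega
end

section
/- Let n be a positive integer and f : ZMod n → Fin k a function, and define the coloring χ : ZMod n × ZMod n → Fin k of the n×n grid by χ(i,j) = f(j − i) (the shift-pattern coloring determined by the first row f). Then χ is rectangle-free (there are no i₁ ≠ i₂ and j₁ ≠ j₂ with χ(i₁,j₁) = χ(i₁,j₂) = χ(i₂,j₁) = χ(i₂,j₂)) if and only if for every color c ∈ Fin k and every d ∈ ZMod n with d ≠ 0, there is at most one a ∈ ZMod n with f(a) = c and f(a + d) = c. -/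
theorem stmt_6 (n k : ℕ) (hn : 0 < n) (f : ZMod n → Fin k) :
    IsRectFree (fun p : ZMod n × ZMod n => f (p.2 - p.1)) ↔
      ∀ (c : Fin k) (d : ZMod n), d ≠ 0 →
        ∀ a₁ a₂ : ZMod n,
          f a₁ = c → f (a₁ + d) = c → f a₂ = c → f (a₂ + d) = c → a₁ = a₂ := by
  constructor
  · intro h c d hd a₁ a₂ h1 h2 h3 h4
    by_contra hne
    have hi : (0 : ZMod n) ≠ a₁ - a₂ := by
      intro he
      exact hne (by rw [← sub_eq_zero, ← he])
    have hj : a₁ ≠ a₁ + d := by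
      intro he
      exact hd (by linear_combination -he)
    exact h 0 (a₁ - a₂) a₁ (a₁ + d) hi hj
      ⟨by simp [h1, h2], by simp [h1, h3, show a₁ - (a₁ - a₂) = a₂ by ring],
       by simp [h1, h4, show a₁ + d - (a₁ - a₂) = a₂ + d by ring]⟩
  · intro h i₁ i₂ j₁ j₂ hi hj ⟨e1, e2, e3⟩
    simp only at e1 e2 e3
    have hd : j₂ - j₁ ≠ 0 := fun he => hj (by linear_combination -he)
    have := h (f (j₁ - i₁)) (j₂ - j₁) hd (j₁ - i₁) (j₁ - i₂) rfl
      (by rw [show j₁ - i₁ + (j₂ - j₁) = j₂ - i₁ by ring, e1])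
      e2.symm
      (by rw [show j₁ - i₂ + (j₂ - j₁) = j₂ - i₂ by ring, e3])
    exact hi (by linear_combination -this)
end

section
/- Let x, y, z, k be positive integers and let χ : Fin (x*z) × Fin (y*z) → Fin k be a rectangle-free coloring with the right-shift pattern on z-subgrids. Then for every color c < k and every subgrid-column b < y: if z is odd, Σ over a < x of v(c,a,b)·(v(c,a,b) − 1) ≤ z − 1, and if z is even, Σ over a < x of v(c,a,b)·(v(c,a,b) − 1) ≤ z − 2. -/
theorem grid_cell_lt {x z a i : ℕ} (ha : a < x) (hi : i < z) : a * z + i < x * z := by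
  calc a * z + i < a * z + z := by omega
    _ = (a + 1) * z := by ring
    _ ≤ x * z := Nat.mul_le_mul_right z ha

theorem grid_row_lt {x z a : ℕ} (ha : a < x) (hz : 0 < z) : a * z < x * z := by
  have := grid_cell_lt ha hz; omega

/-- `χ` has the right-shift pattern on `z`-subgrids: within each `z × z` subgrid,
row `i` is the first row of the subgrid shifted right by `i` with wraparound,
i.e. `χ (a*z + i, b*z + j) = χ (a*z, b*z + ((j - i) mod z))`. -/
def HasShiftPattern (x y z k : ℕ) (χ : Fin (x*z) × Fin (y*z) → Fin k) : Prop :=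
  ∀ (a b i j : ℕ) (ha : a < x) (hb : b < y) (hi : i < z) (hj : j < z),
    χ (⟨a*z + i, grid_cell_lt ha hi⟩, ⟨b*z + j, grid_cell_lt hb hj⟩) =
    χ (⟨a*z, grid_row_lt ha (Nat.lt_of_le_of_lt (Nat.zero_le i) hi)⟩,
       ⟨b*z + (z + j - i) % z,
        grid_cell_lt hb (Nat.mod_lt _ (Nat.lt_of_le_of_lt (Nat.zero_le i) hi))⟩)

/-- `vcount χ c a b _ _ _` is the number of occurrences of color `c` in the first
row of the subgrid `(a, b)`. -/
def vcount {x y z k : ℕ} (χ : Fin (x*z) × Fin (y*z) → Fin k) (c : Fin k)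
    (a b : ℕ) (ha : a < x) (hb : b < y) (hz : 0 < z) : ℕ :=
  (Finset.univ.filter (fun j : Fin z =>
    χ (⟨a*z, grid_row_lt ha hz⟩, ⟨b*z + (j : ℕ), grid_cell_lt hb j.isLt⟩) = c)).card

lemma mod_shift_eq {z u d : ℕ} (hu : u < z) (hd : d < z) :
    (z + d - (z - u) % z) % z = (u + d) % z := by
  rcases Nat.eq_zero_or_pos u with h | h
  · subst h
    simp [Nat.mod_self, Nat.add_mod_left]
  · have h1 : (z - u) % z = z - u := Nat.mod_eq_of_lt (by omega)
    rw [h1]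
    have h2 : z + d - (z - u) = u + d := by omega
    rw [h2]

lemma mod_diff_add {z u u' : ℕ} (hu : u < z) (hu' : u' < z) :
    (u + (z + u' - u) % z) % z = u' := by
  rw [Nat.add_mod_mod]
  have h2 : u + (z + u' - u) = z + u' := by omega
  rw [h2, Nat.add_mod_left, Nat.mod_eq_of_lt hu']

lemma neg_mod_inj {z u u' : ℕ} (hu : u < z) (hu' : u' < z)
    (h : (z - u) % z = (z - u') % z) : u = u' := by
  have e : ∀ w, w < z → (z - w) % z = if w = 0 then 0 else z - w := by
    intro w hw
    rcases Nat.eq_zero_or_pos w with h1 | h1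
    · simp [h1, Nat.mod_self]
    · rw [if_neg (by omega), Nat.mod_eq_of_lt (by omega)]
  rw [e u hu, e u' hu'] at h
  split_ifs at h <;> omega

lemma diff_sum {z u u' : ℕ} (hu : u < z) (hu' : u' < z) (h : u ≠ u') :
    (z + u' - u) % z + (z + u - u') % z = z := by
  rcases Nat.lt_or_ge u u' with h1 | h1
  · have e1 : z + u' - u = z + (u' - u) := by omega
    have e2 : (z + (u' - u)) % z = u' - u := by
      rw [Nat.add_mod_left]; exact Nat.mod_eq_of_lt (by omega)
    have e3 : z + u - u' = z - (u' - u) := by omega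
    have e4 : (z - (u' - u)) % z = z - (u' - u) := Nat.mod_eq_of_lt (by omega)
    rw [e1, e2, e3, e4]; omega
  · have h1' : u' < u := by omega
    have e1 : z + u - u' = z + (u - u') := by omega
    have e2 : (z + (u - u')) % z = u - u' := by
      rw [Nat.add_mod_left]; exact Nat.mod_eq_of_lt (by omega)
    have e3 : z + u' - u = z - (u - u') := by omega
    have e4 : (z - (u - u')) % z = z - (u - u') := Nat.mod_eq_of_lt (by omega)
    rw [e1, e2, e3, e4]; omega

/-- Core lemma: two distinct ordered pairs of color-`c` positions (in first rows of
subgrids in the same subgrid-column `b`) with the same cyclic difference yield a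
monochromatic rectangle, contradicting rectangle-freeness. -/
lemma no_rep_diff {x y z k : ℕ} (hz : 0 < z)
    (χ : Fin (x*z) × Fin (y*z) → Fin k)
    (hrf : IsRectFree χ) (hshift : HasShiftPattern x y z k χ)
    (c : Fin k) (b : ℕ) (hb : b < y)
    (a₁ a₂ : ℕ) (ha₁ : a₁ < x) (ha₂ : a₂ < x)
    (u₁ u₁' u₂ u₂' : ℕ) (hu₁ : u₁ < z) (hu₁' : u₁' < z) (hu₂ : u₂ < z) (hu₂' : u₂' < z)
    (m₁ : χ (⟨a₁*z, grid_row_lt ha₁ hz⟩, ⟨b*z+u₁, grid_cell_lt hb hu₁⟩) = c)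
    (m₁' : χ (⟨a₁*z, grid_row_lt ha₁ hz⟩, ⟨b*z+u₁', grid_cell_lt hb hu₁'⟩) = c)
    (m₂ : χ (⟨a₂*z, grid_row_lt ha₂ hz⟩, ⟨b*z+u₂, grid_cell_lt hb hu₂⟩) = c)
    (m₂' : χ (⟨a₂*z, grid_row_lt ha₂ hz⟩, ⟨b*z+u₂', grid_cell_lt hb hu₂'⟩) = c)
    (hne : u₁ ≠ u₁')
    (hdiff : (z + u₁' - u₁) % z = (z + u₂' - u₂) % z)
    (hpair : ¬ (a₁ = a₂ ∧ u₁ = u₂)) : False := by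
  set d := (z + u₁' - u₁) % z with hd_def
  have hd : d < z := Nat.mod_lt _ hz
  have hrec₁ : (u₁ + d) % z = u₁' := mod_diff_add hu₁ hu₁'
  have hrec₂ : (u₂ + d) % z = u₂' := by rw [hdiff]; exact mod_diff_add hu₂ hu₂'
  have hd0 : d ≠ 0 := by
    intro h0
    apply hne
    rw [h0, Nat.add_zero, Nat.mod_eq_of_lt hu₁] at hrec₁
    exact hrec₁
  set i₁ := (z - u₁) % z with hi₁_def
  set i₂ := (z - u₂) % z with hi₂_def
  have hi₁ : i₁ < z := Nat.mod_lt _ hz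
  have hi₂ : i₂ < z := Nat.mod_lt _ hz
  -- the four corners
  have e₁ : χ (⟨a₁*z + i₁, grid_cell_lt ha₁ hi₁⟩, ⟨b*z + 0, grid_cell_lt hb hz⟩) = c := by
    have h := hshift a₁ b i₁ 0 ha₁ hb hi₁ hz
    have hm : (z + 0 - i₁) % z = u₁ := by
      have := mod_shift_eq hu₁ hz
      simpa [Nat.mod_eq_of_lt hu₁] using this
    rw [h]
    simp only [hm]
    exact m₁
  have e₂ : χ (⟨a₁*z + i₁, grid_cell_lt ha₁ hi₁⟩, ⟨b*z + d, grid_cell_lt hb hd⟩) = c := by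
    have h := hshift a₁ b i₁ d ha₁ hb hi₁ hd
    have hm : (z + d - i₁) % z = u₁' := by
      rw [hi₁_def, mod_shift_eq hu₁ hd, hrec₁]
    rw [h]
    simp only [hm]
    exact m₁'
  have e₃ : χ (⟨a₂*z + i₂, grid_cell_lt ha₂ hi₂⟩, ⟨b*z + 0, grid_cell_lt hb hz⟩) = c := by
    have h := hshift a₂ b i₂ 0 ha₂ hb hi₂ hz
    have hm : (z + 0 - i₂) % z = u₂ := by
      have := mod_shift_eq hu₂ hz
      simpa [Nat.mod_eq_of_lt hu₂] using this
    rw [h]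
    simp only [hm]
    exact m₂
  have e₄ : χ (⟨a₂*z + i₂, grid_cell_lt ha₂ hi₂⟩, ⟨b*z + d, grid_cell_lt hb hd⟩) = c := by
    have h := hshift a₂ b i₂ d ha₂ hb hi₂ hd
    have hm : (z + d - i₂) % z = u₂' := by
      rw [hi₂_def, mod_shift_eq hu₂ hd, hrec₂]
    rw [h]
    simp only [hm]
    exact m₂'
  -- rows distinct
  have hrow : a₁*z + i₁ ≠ a₂*z + i₂ := by
    rcases Nat.lt_trichotomy a₁ a₂ with h | h | h
    · have h2 : a₁*z + z ≤ a₂*z := by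
        calc a₁*z + z = (a₁+1)*z := by ring
          _ ≤ a₂*z := Nat.mul_le_mul_right z h
      intro hcon; omega
    · subst h
      have hu12 : u₁ ≠ u₂ := fun h' => hpair ⟨rfl, h'⟩
      intro hcon
      exact hu12 (neg_mod_inj hu₁ hu₂ (by omega))
    · have h2 : a₂*z + z ≤ a₁*z := by
        calc a₂*z + z = (a₂+1)*z := by ring
          _ ≤ a₁*z := Nat.mul_le_mul_right z h
      intro hcon; omega
  have hcol : b*z + 0 ≠ b*z + d := by omega
  exact hrf ⟨a₁*z + i₁, grid_cell_lt ha₁ hi₁⟩ ⟨a₂*z + i₂, grid_cell_lt ha₂ hi₂⟩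
    ⟨b*z + 0, grid_cell_lt hb hz⟩ ⟨b*z + d, grid_cell_lt hb hd⟩
    (fun h => hrow (congrArg Fin.val h)) (fun h => hcol (congrArg Fin.val h))
    ⟨by rw [e₁, e₂], by rw [e₁, e₃], by rw [e₁, e₄]⟩

theorem stmt_8 (x y z k : ℕ) (hx : 0 < x) (hy : 0 < y) (hz : 0 < z) (hk : 0 < k)
    (χ : Fin (x*z) × Fin (y*z) → Fin k)
    (hrf : IsRectFree χ)
    (hshift : HasShiftPattern x y z k χ) :
    ∀ (c : Fin k) (b : ℕ) (hb : b < y),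
      (Odd z →
        ∑ a : Fin x, vcount χ c a b a.isLt hb hz * (vcount χ c a b a.isLt hb hz - 1)
          ≤ z - 1) ∧
      (Even z →
        ∑ a : Fin x, vcount χ c a b a.isLt hb hz * (vcount χ c a b a.isLt hb hz - 1)
          ≤ z - 2) := by
  intro c b hb
  classical
  -- positions of color c in first row of subgrid (a, b)
  set S : Fin x → Finset (Fin z) := fun a => Finset.univ.filter
    (fun u : Fin z =>
      χ (⟨a*z, grid_row_lt a.isLt hz⟩, ⟨b*z + (u : ℕ), grid_cell_lt hb u.isLt⟩) = c) with hS
  have hv : ∀ a : Fin x, vcount χ c a b a.isLt hb hz = (S a).card := fun a => rfl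
  have hmemS : ∀ (a : Fin x) (u : Fin z), u ∈ S a ↔
      χ (⟨a*z, grid_row_lt a.isLt hz⟩, ⟨b*z + (u : ℕ), grid_cell_lt hb u.isLt⟩) = c := by
    intro a u; rw [hS]; simp
  set dif : Fin z × Fin z → Fin z := fun p =>
    ⟨(z + (p.2 : ℕ) - (p.1 : ℕ)) % z, Nat.mod_lt _ hz⟩ with hdif
  set F : Fin x → Finset (Fin z) := fun a => (S a).offDiag.image dif with hF
  -- key consequence of rectangle-freeness
  have key : ∀ (a₁ a₂ : Fin x) (p q : Fin z × Fin z),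
      p ∈ (S a₁).offDiag → q ∈ (S a₂).offDiag → dif p = dif q →
      (a₁ = a₂ ∧ p.1 = q.1) ∨ False → True := fun _ _ _ _ _ _ _ _ => trivial
  have key2 : ∀ (a₁ a₂ : Fin x) (p q : Fin z × Fin z),
      p ∈ (S a₁).offDiag → q ∈ (S a₂).offDiag → dif p = dif q →
      ¬ (a₁ = a₂ ∧ p.1 = q.1) → False := by
    intro a₁ a₂ p q hp hq hd hne
    rw [Finset.mem_offDiag] at hp hq
    obtain ⟨hp1, hp2, hp3⟩ := hp
    obtain ⟨hq1, hq2, hq3⟩ := hq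
    rw [hmemS] at hp1 hp2 hq1 hq2
    have hdv : (z + (p.2:ℕ) - (p.1:ℕ)) % z = (z + (q.2:ℕ) - (q.1:ℕ)) % z :=
      congrArg Fin.val hd
    exact no_rep_diff hz χ hrf hshift c b hb a₁ a₂ a₁.isLt a₂.isLt
      p.1 p.2 q.1 q.2 p.1.isLt p.2.isLt q.1.isLt q.2.isLt
      hp1 hp2 hq1 hq2 (fun h => hp3 (Fin.ext h)) hdv
      (fun ⟨h1, h2⟩ => hne ⟨Fin.ext h1, Fin.ext h2⟩)
  -- determinedness of second coordinate
  have hsnd : ∀ (p q : Fin z × Fin z), p.1 = q.1 → dif p = dif q → p.2 = q.2 := by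
    intro p q h1 h2
    have hdv : (z + (p.2:ℕ) - (p.1:ℕ)) % z = (z + (q.2:ℕ) - (q.1:ℕ)) % z :=
      congrArg Fin.val h2
    have e1 := mod_diff_add p.1.isLt p.2.isLt
    have e2 := mod_diff_add q.1.isLt q.2.isLt
    apply Fin.ext
    rw [← e1, ← e2, hdv, h1]
  have hcardF : ∀ a : Fin x, (F a).card = (S a).card * ((S a).card - 1) := by
    intro a
    rw [hF]
    rw [Finset.card_image_of_injOn, Finset.offDiag_card]
    · have hmn : ∀ n : ℕ, n * n - n = n * (n - 1) := by
        intro n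
        cases n with
        | zero => simp
        | succ m =>
          rw [Nat.succ_sub_one, Nat.mul_succ]
          omega
      exact hmn _
    · intro p hp q hq hpq
      simp only [Finset.mem_coe] at hp hq
      by_cases h1 : p.1 = q.1
      · exact Prod.ext h1 (hsnd p q h1 hpq)
      · exact absurd (key2 a a p q hp hq hpq (fun h => h1 h.2)) (by simp)
  have h0 : ∀ (a : Fin x), (⟨0, hz⟩ : Fin z) ∉ F a := by
    intro a hmem
    rw [hF] at hmem
    simp only [Finset.mem_image] at hmem
    obtain ⟨p, hp, hpe⟩ := hmem
    rw [Finset.mem_offDiag] at hp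
    have hdv : (z + (p.2:ℕ) - (p.1:ℕ)) % z = 0 := congrArg Fin.val hpe
    have := mod_diff_add p.1.isLt p.2.isLt
    rw [hdv, Nat.add_zero, Nat.mod_eq_of_lt p.1.isLt] at this
    exact hp.2.2 (Fin.ext this)
  have hdisj : ∀ a₁ ∈ (Finset.univ : Finset (Fin x)), ∀ a₂ ∈ Finset.univ,
      a₁ ≠ a₂ → Disjoint (F a₁) (F a₂) := by
    intro a₁ _ a₂ _ hne
    rw [Finset.disjoint_left]
    intro d hd1 hd2
    rw [hF] at hd1 hd2
    simp only [Finset.mem_image] at hd1 hd2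
    obtain ⟨p, hp, hpe⟩ := hd1
    obtain ⟨q, hq, hqe⟩ := hd2
    exact key2 a₁ a₂ p q hp hq (by rw [hpe, hqe]) (fun h => hne h.1)
  have hsum : ∑ a : Fin x,
      vcount χ c a b a.isLt hb hz * (vcount χ c a b a.isLt hb hz - 1)
      = (Finset.univ.biUnion F).card := by
    rw [Finset.card_biUnion hdisj]
    apply Finset.sum_congr rfl
    intro a _
    rw [hv, hcardF]
  constructor
  · intro _
    rw [hsum]
    have hsub : Finset.univ.biUnion F ⊆ Finset.univ.erase (⟨0, hz⟩ : Fin z) := by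
      intro d hd
      rw [Finset.mem_biUnion] at hd
      obtain ⟨a, _, hda⟩ := hd
      rw [Finset.mem_erase]
      exact ⟨fun h => h0 a (h ▸ hda), Finset.mem_univ _⟩
    calc (Finset.univ.biUnion F).card ≤ _ := Finset.card_le_card hsub
      _ = z - 1 := by
        rw [Finset.card_erase_of_mem (Finset.mem_univ _), Finset.card_univ,
          Fintype.card_fin]
  · intro heven
    have hz2 : 2 * (z / 2) = z := by
      obtain ⟨m, hm⟩ := heven; omega
    have hzge : 2 ≤ z := by omega
    have hhalf_lt : z / 2 < z := by omega
    have hhalf : ∀ (a : Fin x), (⟨z / 2, hhalf_lt⟩ : Fin z) ∉ F a := by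
      intro a hmem
      rw [hF] at hmem
      simp only [Finset.mem_image] at hmem
      obtain ⟨p, hp, hpe⟩ := hmem
      have hpo := hp
      rw [Finset.mem_offDiag] at hpo
      have hdv : (z + (p.2:ℕ) - (p.1:ℕ)) % z = z / 2 := congrArg Fin.val hpe
      -- the reversed pair has the same difference
      have hq : (p.2, p.1) ∈ (S a).offDiag := by
        rw [Finset.mem_offDiag]
        exact ⟨hpo.2.1, hpo.1, fun h => hpo.2.2 h.symm⟩
      have hrev : (z + (p.1:ℕ) - (p.2:ℕ)) % z = z / 2 := by
        have := diff_sum p.1.isLt p.2.isLt (fun h => hpo.2.2 (Fin.ext h))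
        omega
      have hde : dif p = dif (p.2, p.1) := by
        apply Fin.ext
        show (z + (p.2:ℕ) - (p.1:ℕ)) % z = (z + (p.1:ℕ) - (p.2:ℕ)) % z
        rw [hdv, hrev]
      exact key2 a a p (p.2, p.1) hp hq hde (fun h => hpo.2.2 h.2)
    rw [hsum]
    have hne0 : (⟨z / 2, hhalf_lt⟩ : Fin z) ≠ (⟨0, hz⟩ : Fin z) := by
      intro h
      have := congrArg Fin.val h
      simp at this
      omega
    have hsub : Finset.univ.biUnion F ⊆
        (Finset.univ.erase (⟨0, hz⟩ : Fin z)).erase (⟨z / 2, hhalf_lt⟩ : Fin z) := by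
      intro d hd
      rw [Finset.mem_biUnion] at hd
      obtain ⟨a, _, hda⟩ := hd
      rw [Finset.mem_erase, Finset.mem_erase]
      exact ⟨fun h => hhalf a (h ▸ hda), fun h => h0 a (h ▸ hda), Finset.mem_univ _⟩
    calc (Finset.univ.biUnion F).card ≤ _ := Finset.card_le_card hsub
      _ = z - 2 := by
        rw [Finset.card_erase_of_mem, Finset.card_erase_of_mem (Finset.mem_univ _),
          Finset.card_univ, Fintype.card_fin]
        · omega
        · rw [Finset.mem_erase]
          exact ⟨hne0, Finset.mem_univ _⟩
end

section
/- Let x, y, z, k be positive integers and let χ : Fin (x*z) × Fin (y*z) → Fin k be a rectangle-free coloring with the right-shift pattern on z-subgrids. Then for every color c < k and every pair of distinct subgrid-columns b₁ ≠ b₂ (b₁, b₂ < y): Σ over a < x of v(c,a,b₁)·v(c,a,b₂) ≤ z. -/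
lemma natCast_zmod_inj {z u v : ℕ} (hz : 0 < z) (hu : u < z) (hv : v < z)
    (h : (u : ZMod z) = v) : u = v := by
  haveI : NeZero z := ⟨hz.ne'⟩
  have := (ZMod.natCast_eq_natCast_iff' u v z).mp h
  rwa [Nat.mod_eq_of_lt hu, Nat.mod_eq_of_lt hv] at this

theorem stmt_9 (x y z k : ℕ) (hx : 0 < x) (hy : 0 < y) (hz : 0 < z) (hk : 0 < k)
    (χ : Fin (x*z) × Fin (y*z) → Fin k)
    (hrf : IsRectFree χ)
    (hshift : HasShiftPattern x y z k χ) :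
    ∀ (c : Fin k) (b₁ b₂ : ℕ) (hb₁ : b₁ < y) (hb₂ : b₂ < y), b₁ ≠ b₂ →
      ∑ a : Fin x, vcount χ c a b₁ a.isLt hb₁ hz * vcount χ c a b₂ a.isLt hb₂ hz
        ≤ z := by
  intro c b₁ b₂ hb₁ hb₂ hbne
  classical
  haveI : NeZero z := ⟨hz.ne'⟩
  set P : Fin x × Fin z × Fin z → Prop := fun p =>
      χ (⟨p.1*z, grid_row_lt p.1.isLt hz⟩,
         ⟨b₁*z + (p.2.1 : ℕ), grid_cell_lt hb₁ p.2.1.isLt⟩) = c ∧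
      χ (⟨p.1*z, grid_row_lt p.1.isLt hz⟩,
         ⟨b₂*z + (p.2.2 : ℕ), grid_cell_lt hb₂ p.2.2.isLt⟩) = c with hP
  set T : Finset (Fin x × Fin z × Fin z) := Finset.univ.filter P with hT
  have hcard : ∑ a : Fin x, vcount χ c a b₁ a.isLt hb₁ hz * vcount χ c a b₂ a.isLt hb₂ hz
      = T.card := by
    rw [hT, Finset.card_filter, Fintype.sum_prod_type]
    refine Finset.sum_congr rfl fun a _ => ?_
    rw [Fintype.sum_prod_type]
    unfold vcount
    rw [Finset.card_filter, Finset.card_filter, Finset.sum_mul_sum]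
    refine Finset.sum_congr rfl fun j₁ _ => Finset.sum_congr rfl fun j₂ _ => ?_
    simp only [hP]
    split_ifs with h1 h2 h3 h3 <;> simp_all
  rw [hcard]
  have hle : T.card ≤ (Finset.univ : Finset (Fin z)).card := by
    apply Finset.card_le_card_of_injOn
      (fun p => (⟨(z + (p.2.2 : ℕ) - (p.2.1 : ℕ)) % z, Nat.mod_lt _ hz⟩ : Fin z))
      (fun _ _ => Finset.mem_univ _)
    rintro ⟨a, j₁, j₂⟩ hp ⟨a', j₁', j₂'⟩ hq heq
    simp only [Finset.coe_filter, Set.mem_setOf_eq, hT, Finset.mem_coe,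
      Finset.mem_filter, Finset.mem_univ, true_and, hP] at hp hq
    have hmod : (z + (j₂ : ℕ) - (j₁ : ℕ)) % z = (z + (j₂' : ℕ) - (j₁' : ℕ)) % z :=
      congrArg Fin.val heq
    have hd : ((j₂ : ℕ) : ZMod z) - ((j₁ : ℕ) : ZMod z)
        = ((j₂' : ℕ) : ZMod z) - ((j₁' : ℕ) : ZMod z) := by
      have h1 : ((z + (j₂ : ℕ) - (j₁ : ℕ) : ℕ) : ZMod z)
          = ((z + (j₂' : ℕ) - (j₁' : ℕ) : ℕ) : ZMod z) := by
        rw [← ZMod.natCast_mod _ z, ← ZMod.natCast_mod (z + (j₂' : ℕ) - (j₁' : ℕ)) z, hmod]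
      rw [Nat.cast_sub (by omega), Nat.cast_sub (by omega), Nat.cast_add, Nat.cast_add,
        ZMod.natCast_self] at h1
      linear_combination h1
    by_contra hne
    -- the shift amount
    set i : ℕ := (z + (j₁' : ℕ) - (j₁ : ℕ)) % z with hi_def
    have hi_lt : i < z := Nat.mod_lt _ hz
    have hi_cast : (i : ZMod z) = ((j₁' : ℕ) : ZMod z) - ((j₁ : ℕ) : ZMod z) := by
      rw [hi_def, ZMod.natCast_mod, Nat.cast_sub (by omega), Nat.cast_add, ZMod.natCast_self]
      ring
    have e1 : (z + (j₁' : ℕ) - i) % z = (j₁ : ℕ) := by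
      apply natCast_zmod_inj hz (Nat.mod_lt _ hz) j₁.isLt
      rw [ZMod.natCast_mod, Nat.cast_sub (by omega), Nat.cast_add, ZMod.natCast_self, hi_cast]
      ring
    have e2 : (z + (j₂' : ℕ) - i) % z = (j₂ : ℕ) := by
      apply natCast_zmod_inj hz (Nat.mod_lt _ hz) j₂.isLt
      rw [ZMod.natCast_mod, Nat.cast_sub (by omega), Nat.cast_add, ZMod.natCast_self, hi_cast]
      linear_combination -hd
    have e1' : (z + (j₁' : ℕ) - 0) % z = (j₁' : ℕ) := by
      simp [Nat.add_mod_left, Nat.mod_eq_of_lt j₁'.isLt]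
    have e2' : (z + (j₂' : ℕ) - 0) % z = (j₂' : ℕ) := by
      simp [Nat.add_mod_left, Nat.mod_eq_of_lt j₂'.isLt]
    -- four corners have color c
    have hc1 : χ (⟨(a : ℕ)*z + i, grid_cell_lt a.isLt hi_lt⟩,
        ⟨b₁*z + (j₁' : ℕ), grid_cell_lt hb₁ j₁'.isLt⟩) = c := by
      rw [hshift a b₁ i j₁' a.isLt hb₁ hi_lt j₁'.isLt]
      simp only [e1]
      exact hp.1
    have hc2 : χ (⟨(a : ℕ)*z + i, grid_cell_lt a.isLt hi_lt⟩,
        ⟨b₂*z + (j₂' : ℕ), grid_cell_lt hb₂ j₂'.isLt⟩) = c := by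
      rw [hshift a b₂ i j₂' a.isLt hb₂ hi_lt j₂'.isLt]
      simp only [e2]
      exact hp.2
    have hc3 : χ (⟨(a' : ℕ)*z + 0, grid_cell_lt a'.isLt hz⟩,
        ⟨b₁*z + (j₁' : ℕ), grid_cell_lt hb₁ j₁'.isLt⟩) = c := by
      rw [hshift a' b₁ 0 j₁' a'.isLt hb₁ hz j₁'.isLt]
      simp only [e1']
      exact hq.1
    have hc4 : χ (⟨(a' : ℕ)*z + 0, grid_cell_lt a'.isLt hz⟩,
        ⟨b₂*z + (j₂' : ℕ), grid_cell_lt hb₂ j₂'.isLt⟩) = c := by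
      rw [hshift a' b₂ 0 j₂' a'.isLt hb₂ hz j₂'.isLt]
      simp only [e2']
      exact hq.2
    -- rows are distinct
    have hrow : (a : ℕ)*z + i ≠ (a' : ℕ)*z + 0 := by
      rcases eq_or_ne (a : ℕ) (a' : ℕ) with hav | hav
      · -- same subgrid row; then j₁ ≠ j₁', hence i ≠ 0
        have hj1ne : (j₁ : ℕ) ≠ (j₁' : ℕ) := by
          intro hjeq
          have hj2 : (j₂ : ℕ) = (j₂' : ℕ) := by
            apply natCast_zmod_inj hz j₂.isLt j₂'.isLt
            have hcast : ((j₁ : ℕ) : ZMod z) = ((j₁' : ℕ) : ZMod z) := by rw [hjeq]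
            linear_combination hd + hcast
          exact hne (by
            ext
            · exact hav
            · exact hjeq
            · exact hj2)
        have hi0 : i ≠ 0 := by
          intro h0
          apply hj1ne
          symm
          apply natCast_zmod_inj hz j₁'.isLt j₁.isLt
          have : ((i : ℕ) : ZMod z) = 0 := by rw [h0]; simp
          rw [hi_cast] at this
          linear_combination this
        have hveq : (a : ℕ)*z = (a' : ℕ)*z := by rw [hav]
        omega
      · rcases Nat.lt_or_ge (a : ℕ) (a' : ℕ) with h | h
        · have hmul : ((a : ℕ)+1)*z ≤ (a' : ℕ)*z := Nat.mul_le_mul_right z h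
          have hr : ((a : ℕ)+1)*z = (a : ℕ)*z + z := by ring
          omega
        · have h' : (a' : ℕ) < (a : ℕ) := by omega
          have hmul : ((a' : ℕ)+1)*z ≤ (a : ℕ)*z := Nat.mul_le_mul_right z h'
          have hr : ((a' : ℕ)+1)*z = (a' : ℕ)*z + z := by ring
          omega
    -- columns are distinct
    have hcol : b₁*z + (j₁' : ℕ) ≠ b₂*z + (j₂' : ℕ) := by
      intro heqc
      apply hbne
      have h1 : (b₁*z + (j₁' : ℕ))/z = b₁ := by
        rw [mul_comm, Nat.mul_add_div hz, Nat.div_eq_of_lt j₁'.isLt]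
        omega
      have h2 : (b₂*z + (j₂' : ℕ))/z = b₂ := by
        rw [mul_comm, Nat.mul_add_div hz, Nat.div_eq_of_lt j₂'.isLt]
        omega
      rw [← h1, ← h2, heqc]
    exact hrf ⟨(a : ℕ)*z + i, grid_cell_lt a.isLt hi_lt⟩
      ⟨(a' : ℕ)*z + 0, grid_cell_lt a'.isLt hz⟩
      ⟨b₁*z + (j₁' : ℕ), grid_cell_lt hb₁ j₁'.isLt⟩
      ⟨b₂*z + (j₂' : ℕ), grid_cell_lt hb₂ j₂'.isLt⟩
      (by simpa [Fin.ext_iff] using hrow)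
      (by simpa [Fin.ext_iff] using hcol)
      ⟨hc1.trans hc2.symm, hc1.trans hc3.symm, hc1.trans hc4.symm⟩
  simpa using hle
end

section
/- The number of rectangle-free colorings χ : Fin 4 × Fin 4 → Fin 2 of the 4×4 grid with 2 colors is exactly 840. -/
set_option maxRecDepth 10000


def pow2le1 (m : ℕ) : Bool := (m &&& (m - 1)) == 0
def comp (a b : ℕ) : Bool := pow2le1 (a &&& b) && pow2le1 ((a ^^^ 15) &&& (b ^^^ 15))

def ok (n : ℕ) : Bool :=
  comp (n % 16) (n / 16 % 16) && comp (n % 16) (n / 256 % 16) && comp (n % 16) (n / 4096 % 16) &&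
  comp (n / 16 % 16) (n / 256 % 16) && comp (n / 16 % 16) (n / 4096 % 16) &&
  comp (n / 256 % 16) (n / 4096 % 16)

def c4 (lo : ℕ) : ℕ → ℕ
  | 0 => 0
  | j+1 => c4 lo j + (if comp j (lo / 16 % 16) && comp j (lo / 256 % 16) && comp j (lo / 4096 % 16) then 1 else 0)

def c8 (lo : ℕ) : ℕ → ℕ
  | 0 => 0
  | j+1 => c8 lo j + (if comp j (lo / 256 % 16) && comp j (lo / 4096 % 16) then c4 (lo + 16 * j) 16 else 0)

def c12 (lo : ℕ) : ℕ → ℕ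
  | 0 => 0
  | j+1 => c12 lo j + (if comp j (lo / 4096 % 16) then c8 (lo + 256 * j) 16 else 0)

def ctop : ℕ → ℕ
  | 0 => 0
  | j+1 => ctop j + c12 (4096 * j) 16

lemma ok_decomp (lo m : ℕ) (h : 16 ∣ lo) (hm : m < 16) :
    ok (lo + m) =
      (comp (lo / 16 % 16) (lo / 256 % 16) && comp (lo / 16 % 16) (lo / 4096 % 16) &&
       comp (lo / 256 % 16) (lo / 4096 % 16) &&
       (comp m (lo / 16 % 16) && comp m (lo / 256 % 16) && comp m (lo / 4096 % 16))) := by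
  have e0 : (lo + m) % 16 = m := by omega
  have e1 : (lo + m) / 16 % 16 = lo / 16 % 16 := by omega
  have e2 : (lo + m) / 256 % 16 = lo / 256 % 16 := by omega
  have e3 : (lo + m) / 4096 % 16 = lo / 4096 % 16 := by omega
  simp only [ok, e0, e1, e2, e3]
  cases comp m (lo / 16 % 16) <;> cases comp m (lo / 256 % 16) <;>
    cases comp m (lo / 4096 % 16) <;> cases comp (lo / 16 % 16) (lo / 256 % 16) <;>
    cases comp (lo / 16 % 16) (lo / 4096 % 16) <;> cases comp (lo / 256 % 16) (lo / 4096 % 16) <;> rfl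

lemma filter_Ico_card_eq_zero_of_ok_false {lo w : ℕ} (h : ∀ n ∈ Finset.Ico lo (lo + w), ok n = false) :
    ((Finset.Ico lo (lo + w)).filter (fun n => ok n = true)).card = 0 := by
  rw [Finset.card_eq_zero, Finset.filter_eq_empty_iff]
  intro n hn
  simp [h n hn]

lemma c4_eq (lo : ℕ) (h : 16 ∣ lo)
    (hc : (comp (lo / 16 % 16) (lo / 256 % 16) && comp (lo / 16 % 16) (lo / 4096 % 16) &&
          comp (lo / 256 % 16) (lo / 4096 % 16)) = true) :
    ∀ j, j ≤ 16 → c4 lo j = ((Finset.Ico lo (lo + j)).filter (fun n => ok n = true)).card := by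
  intro j
  induction j with
  | zero => intro _; simp [c4]
  | succ j ih =>
    intro hj
    have hico : Finset.Ico lo (lo + (j+1)) = insert (lo + j) (Finset.Ico lo (lo + j)) := by
      ext x; simp [Finset.mem_Ico, Finset.mem_insert]; omega
    rw [c4, ih (by omega), hico, Finset.filter_insert]
    have hok : ok (lo + j) = (comp j (lo / 16 % 16) && comp j (lo / 256 % 16) && comp j (lo / 4096 % 16)) := by
      rw [ok_decomp lo j h (by omega), hc, Bool.true_and]
    by_cases hb : (comp j (lo / 16 % 16) && comp j (lo / 256 % 16) && comp j (lo / 4096 % 16)) = true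
    · rw [if_pos hb, if_pos (by rw [hok]; exact hb), Finset.card_insert_of_notMem (by simp)]
    · rw [if_neg hb, if_neg (by rw [hok]; exact hb)]
      omega

lemma Ico_split (lo a b : ℕ) (hab : a ≤ b) :
    Finset.Ico lo (lo + b) = Finset.Ico lo (lo + a) ∪ Finset.Ico (lo + a) (lo + b) := by
  rw [Finset.Ico_union_Ico_eq_Ico (by omega) (by omega)]

lemma card_split (lo a b : ℕ) (hab : a ≤ b) (p : ℕ → Prop) [DecidablePred p] :
    ((Finset.Ico lo (lo + b)).filter p).card =
      ((Finset.Ico lo (lo + a)).filter p).card + ((Finset.Ico (lo + a) (lo + b)).filter p).card := by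
  rw [Ico_split lo a b hab, Finset.filter_union,
    Finset.card_union_of_disjoint (Finset.disjoint_filter_filter (Finset.Ico_disjoint_Ico_consecutive _ _ _))]

lemma c8_eq (lo : ℕ) (h : 256 ∣ lo)
    (hc : comp (lo / 256 % 16) (lo / 4096 % 16) = true) :
    ∀ j, j ≤ 16 → c8 lo j = ((Finset.Ico lo (lo + 16 * j)).filter (fun n => ok n = true)).card := by
  intro j
  induction j with
  | zero => intro _; simp [c8]
  | succ j ih =>
    intro hj
    rw [c8, ih (by omega), card_split lo (16 * j) (16 * (j+1)) (by omega)]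
    congr 1
    have e1 : (lo + 16 * j) / 16 % 16 = j := by omega
    have e2 : (lo + 16 * j) / 256 % 16 = lo / 256 % 16 := by omega
    have e3 : (lo + 16 * j) / 4096 % 16 = lo / 4096 % 16 := by omega
    have hw : lo + 16 * (j + 1) = (lo + 16 * j) + 16 := by ring
    by_cases hb : (comp j (lo / 256 % 16) && comp j (lo / 4096 % 16)) = true
    · rw [if_pos hb, hw,
        c4_eq (lo + 16 * j) (by omega) (by rw [e1, e2, e3]; simp only [Bool.and_eq_true] at hb ⊢; exact ⟨⟨hb.1, hb.2⟩, hc⟩) 16 (by omega)]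
    · rw [if_neg hb, hw, eq_comm]
      apply filter_Ico_card_eq_zero_of_ok_false
      intro n hn
      simp only [Finset.mem_Ico] at hn
      have en1 : n / 16 % 16 = j := by omega
      have en2 : n / 256 % 16 = lo / 256 % 16 := by omega
      have en3 : n / 4096 % 16 = lo / 4096 % 16 := by omega
      simp only [ok, en1, en2, en3]
      cases h1 : comp j (lo / 256 % 16) <;> cases h2 : comp j (lo / 4096 % 16) <;>
        simp only [Bool.and_false, Bool.false_and, Bool.and_true, Bool.true_and] <;>
        first
          | rfl
          | (exact absurd (by rw [h1, h2]; rfl) hb)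

lemma c12_eq (lo : ℕ) (h : 4096 ∣ lo) :
    ∀ j, j ≤ 16 → c12 lo j = ((Finset.Ico lo (lo + 256 * j)).filter (fun n => ok n = true)).card := by
  intro j
  induction j with
  | zero => intro _; simp [c12]
  | succ j ih =>
    intro hj
    rw [c12, ih (by omega), card_split lo (256 * j) (256 * (j+1)) (by omega)]
    congr 1
    have e1 : (lo + 256 * j) / 256 % 16 = j := by omega
    have e2 : (lo + 256 * j) / 4096 % 16 = lo / 4096 % 16 := by omega
    have hw : lo + 256 * (j + 1) = (lo + 256 * j) + 16 * 16 := by ring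
    by_cases hb : comp j (lo / 4096 % 16) = true
    · rw [if_pos hb, hw, c8_eq (lo + 256 * j) (by omega) (by rw [e1, e2]; exact hb) 16 (by omega)]
    · rw [if_neg hb, hw, eq_comm]
      have hw2 : (lo + 256 * j) + 16 * 16 = (lo + 256 * j) + 256 := by ring
      rw [hw2]
      apply filter_Ico_card_eq_zero_of_ok_false
      intro n hn
      simp only [Finset.mem_Ico] at hn
      have en2 : n / 256 % 16 = j := by omega
      have en3 : n / 4096 % 16 = lo / 4096 % 16 := by omega
      have hbf : comp j (lo / 4096 % 16) = false := by
        cases hx : comp j (lo / 4096 % 16)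
        · rfl
        · exact absurd hx hb
      simp [ok, en2, en3, hbf]

lemma ctop_eq : ∀ j, j ≤ 16 → ctop j = ((Finset.Ico 0 (4096 * j)).filter (fun n => ok n = true)).card := by
  intro j
  induction j with
  | zero => intro _; simp [ctop]
  | succ j ih =>
    intro hj
    have h1 : ctop (j+1) = ctop j + c12 (4096 * j) 16 := rfl
    have h2 := c12_eq (4096 * j) (Dvd.intro j rfl) 16 (by omega)
    have h3 := card_split 0 (4096 * j) (4096 * (j+1)) (by omega) (fun n => ok n = true)
    simp only [Nat.zero_add] at h3
    rw [h1, ih (by omega), h2, show 4096 * j + 256 * 16 = 4096 * (j+1) by ring, h3]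

instance : DecidablePred (IsRectFree (α := Fin 4) (β := Fin 4) (γ := Fin 2)) :=
  fun χ => by unfold IsRectFree; infer_instance

def dcd (n : ℕ) : Fin 4 × Fin 4 → Fin 2 :=
  fun p => ⟨n / 2 ^ (4 * p.1.1 + p.2.1) % 2, Nat.mod_lt _ (by norm_num)⟩

def bv (a : Fin 16) (j : Fin 4) : ℕ := a.1 / 2 ^ j.1 % 2

def rowF (n : ℕ) (i : Fin 4) : Fin 16 := ⟨n / 16 ^ i.1 % 16, Nat.mod_lt _ (by norm_num)⟩

lemma cell_eq (n : ℕ) (i j : Fin 4) : (dcd n (i, j)).1 = bv (rowF n i) j := by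
  fin_cases i <;> fin_cases j <;> simp [dcd, bv, rowF] <;> omega

lemma comp_symm (a b : ℕ) : comp a b = comp b a := by
  unfold comp
  rw [Nat.land_comm a b, Nat.land_comm (a ^^^ 15) (b ^^^ 15)]

set_option maxRecDepth 100000 in
lemma pairIff : ∀ a b : Fin 16,
    (∀ j₁ j₂ : Fin 4, j₁ ≠ j₂ →
      ¬ (bv a j₁ = bv a j₂ ∧ bv a j₁ = bv b j₁ ∧ bv a j₁ = bv b j₂)) ↔ comp a.1 b.1 = true := by
  decide

lemma rect_iff (n : ℕ) : IsRectFree (dcd n) ↔ ok n = true := by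
  have key : IsRectFree (dcd n) ↔
      ∀ i₁ i₂ : Fin 4, i₁ ≠ i₂ → comp (rowF n i₁).1 (rowF n i₂).1 = true := by
    unfold IsRectFree
    constructor
    · intro h i₁ i₂ hi
      rw [← pairIff]
      intro j₁ j₂ hj hcon
      exact h i₁ i₂ j₁ j₂ hi hj (by
        simp only [Fin.ext_iff, cell_eq]
        exact hcon)
    · intro h i₁ i₂ j₁ j₂ hi hj hcon
      exact (pairIff (rowF n i₁) (rowF n i₂)).mpr (h i₁ i₂ hi) j₁ j₂ hj (by
        simpa only [Fin.ext_iff, cell_eq] using hcon)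
  rw [key]
  have r0 : (rowF n 0).1 = n % 16 := by simp [rowF]
  have r1 : (rowF n 1).1 = n / 16 % 16 := by simp [rowF]
  have r2 : (rowF n 2).1 = n / 256 % 16 := by norm_num [rowF]
  have r3 : (rowF n 3).1 = n / 4096 % 16 := by
    show n / 16 ^ ((3:Fin 4):ℕ) % 16 = _
    norm_num [show ((3:Fin 4):ℕ) = 3 from rfl]
  constructor
  · intro h
    have h01 := h 0 1 (by decide); have h02 := h 0 2 (by decide); have h03 := h 0 3 (by decide)
    have h12 := h 1 2 (by decide); have h13 := h 1 3 (by decide); have h23 := h 2 3 (by decide)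
    rw [r0, r1] at h01; rw [r0, r2] at h02; rw [r0, r3] at h03
    rw [r1, r2] at h12; rw [r1, r3] at h13; rw [r2, r3] at h23
    simp [ok, h01, h02, h03, h12, h13, h23]
  · intro h i₁ i₂ hi
    simp only [ok, Bool.and_eq_true] at h
    obtain ⟨⟨⟨⟨⟨h01, h02⟩, h03⟩, h12⟩, h13⟩, h23⟩ := h
    fin_cases i₁ <;> fin_cases i₂ <;> simp_all [r0, r1, r2, r3] <;>
      rw [comp_symm] <;> assumption

def enc (χ : Fin 4 × Fin 4 → Fin 2) : ℕ := (χ (0, 0)).1 + 2 * (χ (0, 1)).1 + 4 * (χ (0, 2)).1 + 8 * (χ (0, 3)).1 + 16 * (χ (1, 0)).1 + 32 * (χ (1, 1)).1 + 64 * (χ (1, 2)).1 + 128 * (χ (1, 3)).1 + 256 * (χ (2, 0)).1 + 512 * (χ (2, 1)).1 + 1024 * (χ (2, 2)).1 + 2048 * (χ (2, 3)).1 + 4096 * (χ (3, 0)).1 + 8192 * (χ (3, 1)).1 + 16384 * (χ (3, 2)).1 + 32768 * (χ (3, 3)).1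

lemma enc_lt (χ : Fin 4 × Fin 4 → Fin 2) : enc χ < 65536 := by
  have h00 : (χ ((0 : Fin 4), (0 : Fin 4))).1 < 2 := (χ (0, 0)).isLt
  have h01 : (χ ((0 : Fin 4), (1 : Fin 4))).1 < 2 := (χ (0, 1)).isLt
  have h02 : (χ ((0 : Fin 4), (2 : Fin 4))).1 < 2 := (χ (0, 2)).isLt
  have h03 : (χ ((0 : Fin 4), (3 : Fin 4))).1 < 2 := (χ (0, 3)).isLt
  have h10 : (χ ((1 : Fin 4), (0 : Fin 4))).1 < 2 := (χ (1, 0)).isLt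
  have h11 : (χ ((1 : Fin 4), (1 : Fin 4))).1 < 2 := (χ (1, 1)).isLt
  have h12 : (χ ((1 : Fin 4), (2 : Fin 4))).1 < 2 := (χ (1, 2)).isLt
  have h13 : (χ ((1 : Fin 4), (3 : Fin 4))).1 < 2 := (χ (1, 3)).isLt
  have h20 : (χ ((2 : Fin 4), (0 : Fin 4))).1 < 2 := (χ (2, 0)).isLt
  have h21 : (χ ((2 : Fin 4), (1 : Fin 4))).1 < 2 := (χ (2, 1)).isLt
  have h22 : (χ ((2 : Fin 4), (2 : Fin 4))).1 < 2 := (χ (2, 2)).isLt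
  have h23 : (χ ((2 : Fin 4), (3 : Fin 4))).1 < 2 := (χ (2, 3)).isLt
  have h30 : (χ ((3 : Fin 4), (0 : Fin 4))).1 < 2 := (χ (3, 0)).isLt
  have h31 : (χ ((3 : Fin 4), (1 : Fin 4))).1 < 2 := (χ (3, 1)).isLt
  have h32 : (χ ((3 : Fin 4), (2 : Fin 4))).1 < 2 := (χ (3, 2)).isLt
  have h33 : (χ ((3 : Fin 4), (3 : Fin 4))).1 < 2 := (χ (3, 3)).isLt
  unfold enc
  omega

lemma dcd_enc (χ : Fin 4 × Fin 4 → Fin 2) : dcd (enc χ) = χ := by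
  have h00 : (χ ((0 : Fin 4), (0 : Fin 4))).1 < 2 := (χ (0, 0)).isLt
  have h01 : (χ ((0 : Fin 4), (1 : Fin 4))).1 < 2 := (χ (0, 1)).isLt
  have h02 : (χ ((0 : Fin 4), (2 : Fin 4))).1 < 2 := (χ (0, 2)).isLt
  have h03 : (χ ((0 : Fin 4), (3 : Fin 4))).1 < 2 := (χ (0, 3)).isLt
  have h10 : (χ ((1 : Fin 4), (0 : Fin 4))).1 < 2 := (χ (1, 0)).isLt
  have h11 : (χ ((1 : Fin 4), (1 : Fin 4))).1 < 2 := (χ (1, 1)).isLt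
  have h12 : (χ ((1 : Fin 4), (2 : Fin 4))).1 < 2 := (χ (1, 2)).isLt
  have h13 : (χ ((1 : Fin 4), (3 : Fin 4))).1 < 2 := (χ (1, 3)).isLt
  have h20 : (χ ((2 : Fin 4), (0 : Fin 4))).1 < 2 := (χ (2, 0)).isLt
  have h21 : (χ ((2 : Fin 4), (1 : Fin 4))).1 < 2 := (χ (2, 1)).isLt
  have h22 : (χ ((2 : Fin 4), (2 : Fin 4))).1 < 2 := (χ (2, 2)).isLt
  have h23 : (χ ((2 : Fin 4), (3 : Fin 4))).1 < 2 := (χ (2, 3)).isLt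
  have h30 : (χ ((3 : Fin 4), (0 : Fin 4))).1 < 2 := (χ (3, 0)).isLt
  have h31 : (χ ((3 : Fin 4), (1 : Fin 4))).1 < 2 := (χ (3, 1)).isLt
  have h32 : (χ ((3 : Fin 4), (2 : Fin 4))).1 < 2 := (χ (3, 2)).isLt
  have h33 : (χ ((3 : Fin 4), (3 : Fin 4))).1 < 2 := (χ (3, 3)).isLt
  funext p
  obtain ⟨i, j⟩ := p
  apply Fin.ext
  fin_cases i <;> fin_cases j <;> simp [dcd, enc] <;> omega

lemma enc_dcd (n : ℕ) (hn : n < 65536) : enc (dcd n) = n := by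
  simp only [enc, dcd]
  norm_num [show ((0:Fin 4):ℕ) = 0 from rfl, show ((1:Fin 4):ℕ) = 1 from rfl,
    show ((2:Fin 4):ℕ) = 2 from rfl, show ((3:Fin 4):ℕ) = 3 from rfl]
  omega

set_option maxRecDepth 1000000 in
set_option maxHeartbeats 1000000 in
theorem ctop16 : ctop 16 = 840 := by decide

theorem stmt_10 :
    {χ : Fin 4 × Fin 4 → Fin 2 | IsRectFree χ}.ncard = 840 := by
  have hset : {χ : Fin 4 × Fin 4 → Fin 2 | IsRectFree χ} =
      ↑(Finset.univ.filter fun χ : Fin 4 × Fin 4 → Fin 2 => IsRectFree χ) := by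
    ext χ; simp
  rw [hset, Set.ncard_coe_finset]
  have hcard : (Finset.univ.filter fun χ : Fin 4 × Fin 4 → Fin 2 => IsRectFree χ).card =
      ((Finset.range 65536).filter fun n => IsRectFree (dcd n)).card := by
    apply Finset.card_bij' (i := fun χ _ => enc χ) (j := fun n _ => dcd n)
    · intro χ hχ
      simp only [Finset.mem_filter, Finset.mem_univ, true_and] at hχ ⊢
      refine ⟨Finset.mem_range.mpr (enc_lt χ), ?_⟩
      rw [dcd_enc]; exact hχ
    · intro n hn
      simp only [Finset.mem_filter, Finset.mem_univ, true_and] at hn ⊢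
      exact hn.2
    · intro χ hχ
      exact dcd_enc χ
    · intro n hn
      simp only [Finset.mem_filter, Finset.mem_range] at hn
      exact enc_dcd n hn.1
  rw [hcard]
  have hfc : ((Finset.range 65536).filter fun n => IsRectFree (dcd n)) =
      ((Finset.range 65536).filter fun n => ok n = true) :=
    Finset.filter_congr (fun n _ => by rw [rect_iff])
  rw [hfc, Finset.range_eq_Ico, show (65536 : ℕ) = 4096 * 16 by norm_num,
    ← ctop_eq 16 (le_refl 16), ctop16]
end

section
/- There exists a rectangle-free coloring χ : Fin 18 × Fin 18 → Fin 4 of the 18×18 grid with 4 colors which has the right-shift pattern on 3-subgrids (with x = y = 6, z = 3). -/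
def rfTbl : ℕ := 33415918668668858153541499124977491120863103804509975527065301377

def rfBase (a b k : ℕ) : Fin 4 :=
  ⟨rfTbl / 4 ^ ((a % 6) * 18 + (b % 6) * 3 + k % 3) % 4, Nat.mod_lt _ (by norm_num)⟩

def rfChi (p : Fin 18 × Fin 18) : Fin 4 :=
  rfBase ((p.1 : ℕ) / 3) ((p.2 : ℕ) / 3) (3 + (p.2 : ℕ) % 3 - (p.1 : ℕ) % 3)

lemma rfBase_congr {a b k a' b' k' : ℕ} (h1 : a % 6 = a' % 6) (h2 : b % 6 = b' % 6)
    (h3 : k % 3 = k' % 3) : rfBase a b k = rfBase a' b' k' := by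
  simp only [rfBase, h1, h2, h3]

set_option maxHeartbeats 4000000 in
theorem stmt_13 :
    ∃ χ : Fin 18 × Fin 18 → Fin 4,
      IsRectFree χ ∧ HasShiftPattern 6 6 3 4 χ := by
  refine ⟨rfChi, ?_, ?_⟩
  · unfold IsRectFree
    decide
  · intro a b i j ha hb hi hj
    show rfBase ((a*3+i)/3) ((b*3+j)/3) (3+(b*3+j)%3-(a*3+i)%3) =
      rfBase ((a*3)/3) ((b*3+(3+j-i)%3)/3) (3+(b*3+(3+j-i)%3)%3-(a*3)%3)
    apply rfBase_congr <;> omega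
end

section
/- There exists a rectangle-free coloring χ : Fin 24 × Fin 24 → Fin 5 of the 24×24 grid with 5 colors which has the right-shift pattern on 4-subgrids (with x = y = 6, z = 4). -/
/-- The color table: `F(n)` is the `n`-th base-5 digit of the numeral below.
The color classes form a partition of `ZMod 24` into Sidon sets. -/
def myF (n : ℕ) : Fin 5 := ⟨40910139617354650 / 5 ^ n % 5, Nat.mod_lt _ (by norm_num)⟩

/-- Reindexing of `Fin 24` so that a Toeplitz coloring gets the shift pattern:
`4a + i ↦ a + 6i (mod 24)`. -/
def myRho (r : ℕ) : ℕ := r / 4 + 6 * (r % 4)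

/-- The coloring: a Toeplitz coloring `F(ρ(col) - ρ(row) mod 24)`. -/
def myChi (p : Fin 24 × Fin 24) : Fin 5 :=
  myF ((myRho p.2.val + 48 - myRho p.1.val) % 24)

set_option maxRecDepth 1000000 in
set_option maxHeartbeats 10000000 in
theorem mySidon : ∀ d1 d2 d3 : Fin 24,
    myF d1.val = myF d2.val → myF d2.val = myF d3.val →
    myF d3.val = myF ((d2.val + d3.val + 48 - d1.val) % 24) →
    d1.val = d2.val ∨ d1.val = d3.val := by decide

theorem myRectFree : IsRectFree myChi := by
  rintro i1 i2 j1 j2 hne1 hne2 ⟨h1, h2, h3⟩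
  have hi1 := i1.isLt; have hi2 := i2.isLt
  have hj1 := j1.isLt; have hj2 := j2.isLt
  have hni : (i1 : ℕ) ≠ (i2 : ℕ) := fun h => hne1 (Fin.ext h)
  have hnj : (j1 : ℕ) ≠ (j2 : ℕ) := fun h => hne2 (Fin.ext h)
  simp only [myChi, myRho] at h1 h2 h3
  have hb1 : ((j1.val/4 + 6*(j1.val%4)) + 48 - (i1.val/4 + 6*(i1.val%4))) % 24 < 24 :=
    Nat.mod_lt _ (by norm_num)
  have hb2 : ((j2.val/4 + 6*(j2.val%4)) + 48 - (i1.val/4 + 6*(i1.val%4))) % 24 < 24 :=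
    Nat.mod_lt _ (by norm_num)
  have hb3 : ((j1.val/4 + 6*(j1.val%4)) + 48 - (i2.val/4 + 6*(i2.val%4))) % 24 < 24 :=
    Nat.mod_lt _ (by norm_num)
  have hkey : ((j2.val/4 + 6*(j2.val%4)) + 48 - (i2.val/4 + 6*(i2.val%4))) % 24 =
      (((j2.val/4 + 6*(j2.val%4)) + 48 - (i1.val/4 + 6*(i1.val%4))) % 24
       + ((j1.val/4 + 6*(j1.val%4)) + 48 - (i2.val/4 + 6*(i2.val%4))) % 24 + 48
       - ((j1.val/4 + 6*(j1.val%4)) + 48 - (i1.val/4 + 6*(i1.val%4))) % 24) % 24 := by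
    omega
  have hs := mySidon ⟨_, hb1⟩ ⟨_, hb2⟩ ⟨_, hb3⟩ h1 (h1.symm.trans h2)
    ((h2.symm.trans h3).trans (congrArg myF hkey))
  simp only at hs
  rcases hs with h | h
  · exact hnj (by omega)
  · exact hni (by omega)

theorem myShift : HasShiftPattern 6 6 4 5 myChi := by
  intro a b i j ha hb hi hj
  unfold myChi
  congr 1
  simp only [myRho]
  have e1 : (b*4+j)/4 = b := by omega
  have e2 : (b*4+j)%4 = j := by omega
  have e3 : (a*4+i)/4 = a := by omega
  have e4 : (a*4+i)%4 = i := by omega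
  have e5 : (a*4)/4 = a := by omega
  have e6 : (a*4)%4 = 0 := by omega
  have e7 : (b*4 + (4+j-i)%4)/4 = b := by omega
  have e8 : (b*4 + (4+j-i)%4)%4 = (4+j-i)%4 := by omega
  rw [e1, e2, e3, e4, e5, e6, e7, e8]
  omega

theorem stmt_14 :
    ∃ χ : Fin 24 × Fin 24 → Fin 5,
      IsRectFree χ ∧ HasShiftPattern 6 6 4 5 χ := by
  exact ⟨myChi, myRectFree, myShift⟩
end

section
/- There exists a rectangle-free coloring χ : Fin 25 × Fin 25 → Fin 5 of the 25×25 grid with 5 colors which has the right-shift pattern on 5-subgrids (with x = y = 5, z = 5) and in which every color occurs exactly once in the first row of every subgrid, i.e. v(c,a,b) = 1 for every color c < 5 and all a, b < 5 (equivalently, every color occurs exactly 5 times in every subgrid). -/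
def chi25 : Fin 25 × Fin 25 → Fin 5 := fun p =>
  ⟨((p.1 : ℕ)/5 * ((p.2 : ℕ)/5) + (p.2 : ℕ) % 5 + 4 * ((p.1 : ℕ) % 5)) % 5, by omega⟩

lemma chiFourNe : (4 : ZMod 5) ≠ 0 := by decide

theorem chi25_rectfree : IsRectFree chi25 := by
  haveI : Fact (Nat.Prime 5) := ⟨by norm_num⟩
  rintro ⟨I₁, hI₁⟩ ⟨I₂, hI₂⟩ ⟨J₁, hJ₁⟩ ⟨J₂, hJ₂⟩ hne1 hne2 ⟨e1, e2, e3⟩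
  simp only [chi25, Fin.mk.injEq] at e1 e2 e3
  have E1 : ((I₁/5 * (J₁/5) + J₁%5 + 4*(I₁%5) : ℕ) : ZMod 5)
      = ((I₁/5 * (J₂/5) + J₂%5 + 4*(I₁%5) : ℕ) : ZMod 5) :=
    (ZMod.natCast_eq_natCast_iff _ _ _).mpr e1
  have E2 : ((I₁/5 * (J₁/5) + J₁%5 + 4*(I₁%5) : ℕ) : ZMod 5)
      = ((I₂/5 * (J₁/5) + J₁%5 + 4*(I₂%5) : ℕ) : ZMod 5) :=
    (ZMod.natCast_eq_natCast_iff _ _ _).mpr e2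
  have E3 : ((I₁/5 * (J₁/5) + J₁%5 + 4*(I₁%5) : ℕ) : ZMod 5)
      = ((I₂/5 * (J₂/5) + J₂%5 + 4*(I₂%5) : ℕ) : ZMod 5) :=
    (ZMod.natCast_eq_natCast_iff _ _ _).mpr e3
  push_cast at E1 E2 E3
  have key : ((I₁/5 : ℕ) - (I₂/5 : ℕ)) * ((J₁/5 : ℕ) - (J₂/5 : ℕ)) = (0 : ZMod 5) := by
    linear_combination E1 + E2 - E3
  rcases mul_eq_zero.mp key with h | h
  · have hA : ((I₁/5 : ℕ) : ZMod 5) = ((I₂/5 : ℕ) : ZMod 5) := sub_eq_zero.mp h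
    have hI : (4 : ZMod 5) * ((I₁%5 : ℕ)) = 4 * ((I₂%5 : ℕ)) := by
      linear_combination E2 - ((J₁/5 : ℕ) : ZMod 5) * hA
    have hI' : ((I₁%5 : ℕ) : ZMod 5) = ((I₂%5 : ℕ) : ZMod 5) :=
      mul_left_cancel₀ chiFourNe hI
    have h1 := (ZMod.natCast_eq_natCast_iff _ _ _).mp hA
    have h2 := (ZMod.natCast_eq_natCast_iff _ _ _).mp hI'
    unfold Nat.ModEq at h1 h2
    exact hne1 (by simp only [Fin.mk.injEq]; omega)
  · have hB : ((J₁/5 : ℕ) : ZMod 5) = ((J₂/5 : ℕ) : ZMod 5) := sub_eq_zero.mp h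
    have hJ : ((J₁%5 : ℕ) : ZMod 5) = ((J₂%5 : ℕ)) := by
      linear_combination E1 - ((I₁/5 : ℕ) : ZMod 5) * hB
    have h1 := (ZMod.natCast_eq_natCast_iff _ _ _).mp hB
    have h2 := (ZMod.natCast_eq_natCast_iff _ _ _).mp hJ
    unfold Nat.ModEq at h1 h2
    exact hne2 (by simp only [Fin.mk.injEq]; omega)


theorem chi25_shift : ∀ (a b i j : ℕ) (ha : a < 5) (hb : b < 5) (hi : i < 5) (hj : j < 5),
    chi25 (⟨a*5 + i, by omega⟩, ⟨b*5 + j, by omega⟩) =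
    chi25 (⟨a*5, by omega⟩, ⟨b*5 + (5 + j - i) % 5, by omega⟩) := by
  intro a b i j ha hb hi hj
  have e1 : (a*5+i)/5 = a := by omega
  have e2 : (a*5+i)%5 = i := by omega
  have e3 : (b*5+j)/5 = b := by omega
  have e4 : (b*5+j)%5 = j := by omega
  have e5 : (a*5)/5 = a := by omega
  have e6 : (a*5)%5 = 0 := by omega
  have e7 : (b*5+(5+j-i)%5)/5 = b := by omega
  have e8 : (b*5+(5+j-i)%5)%5 = (5+j-i)%5 := by omega
  apply Fin.ext
  simp only [chi25, e1, e2, e3, e4, e5, e6, e7, e8]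
  omega

theorem chi25_count : ∀ (c : Fin 5) (a b : ℕ) (ha : a < 5) (hb : b < 5),
    (Finset.univ.filter (fun j : Fin 5 =>
      chi25 (⟨a*5, by omega⟩, ⟨b*5 + (j : ℕ), by omega⟩) = c)).card = 1 := by
  intro c a b ha hb
  have hc : (c : ℕ) < 5 := c.isLt
  apply Finset.card_eq_one.mpr
  refine ⟨⟨((c : ℕ) + 5 - (a*b) % 5) % 5, by omega⟩, ?_⟩
  ext j
  have hj : (j : ℕ) < 5 := j.isLt
  have e1 : (a*5)/5 = a := by omega
  have e2 : (a*5)%5 = 0 := by omega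
  have e3 : (b*5+(j:ℕ))/5 = b := by omega
  have e4 : (b*5+(j:ℕ))%5 = (j:ℕ) := by omega
  simp only [Finset.mem_filter, Finset.mem_univ, true_and, Finset.mem_singleton, chi25,
    Fin.ext_iff, e1, e2, e3, e4]
  omega

theorem stmt_15 :
    ∃ χ : Fin 25 × Fin 25 → Fin 5,
      IsRectFree χ ∧ HasShiftPattern 5 5 5 5 χ ∧
      ∀ (c : Fin 5) (a b : ℕ) (ha : a < 5) (hb : b < 5),
        vcount (x := 5) (y := 5) (z := 5) χ c a b ha hb (by norm_num) = 1 := by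
  refine ⟨chi25, chi25_rectfree, ?_, ?_⟩
  · intro a b i j ha hb hi hj
    exact chi25_shift a b i j ha hb hi hj
  · intro c a b ha hb
    unfold vcount
    exact chi25_count c a b ha hb
end

section
/- There exists a rectangle-free coloring χ : Fin 30 × Fin 25 → Fin 5 of the 30×25 grid with 5 colors. -/
/-!
Index the rows by pairs (slope, offset) in `Option K × K` over a finite field `K`, slope `none`
meaning vertical, and the columns by the points of `K²`. Row `r` gives point `p` the color `c`
for which `p` lies on the line with the slope of `r` and the offset of `r` shifted by `c`. Two
columns of equal color `c` in rows `r₁`, `r₂` are two points on both shifted lines, so these lines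
coincide, and then so do the rows. For `K = ZMod 5` the grid is `30 × 25`.
-/

open Function

section AffinePlane

variable {K : Type*} [Field K]

/-- `(some m, b)` is the line `y = m x + b`, `(none, b)` the vertical line `x = b`. -/
def affineLine : Option K × K → Set (K × K)
  | (some m, b) => {p | p.2 = m * p.1 + b}
  | (none, b) => {p | p.1 = b}

theorem affineLine_eq_of_mem {l₁ l₂ : Option K × K} {p q : K × K} (hpq : p ≠ q)
    (hp₁ : p ∈ affineLine l₁) (hq₁ : q ∈ affineLine l₁)
    (hp₂ : p ∈ affineLine l₂) (hq₂ : q ∈ affineLine l₂) : l₁ = l₂ := by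
  obtain ⟨x₁, y₁⟩ := p
  obtain ⟨x₂, y₂⟩ := q
  obtain ⟨_ | m₁, b₁⟩ := l₁ <;> obtain ⟨_ | m₂, b₂⟩ := l₂ <;>
    simp only [affineLine, Set.mem_ofPred_eq] at hp₁ hq₁ hp₂ hq₂
  · rw [← hp₁, ← hp₂]
  · exact absurd (by subst hp₁ hq₁; rw [hp₂, hq₂]) hpq
  · exact absurd (by subst hp₂ hq₂; rw [hp₁, hq₁]) hpq
  · have hx : x₁ ≠ x₂ := fun hx => hpq (by subst hx; rw [hp₁, hq₁])
    have hm : m₁ = m₂ := by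
      have : (m₁ - m₂) * (x₁ - x₂) = 0 := by linear_combination hp₂ - hq₂ - hp₁ + hq₁
      simpa [sub_eq_zero, hx] using this
    subst hm
    simp only [Prod.mk.injEq, true_and]
    linear_combination hp₂ - hp₁

def affineColoring : (Option K × K) × (K × K) → K
  | ((some m, s), p) => p.2 - m * p.1 - s
  | ((none, s), p) => p.1 - s

theorem mem_affineLine_affineColoring (r : Option K × K) (p : K × K) :
    p ∈ affineLine (r.1, r.2 + affineColoring (r, p)) := by
  obtain ⟨_ | m, s⟩ := r <;> simp [affineLine, affineColoring]

theorem isRectFree_affineColoring : IsRectFree (affineColoring (K := K)) := by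
  rintro r₁ r₂ p q hr hpq ⟨hq, hp₂, hq₂⟩
  have hline := affineLine_eq_of_mem hpq (mem_affineLine_affineColoring r₁ p)
    (hq ▸ mem_affineLine_affineColoring r₁ q) (hp₂ ▸ mem_affineLine_affineColoring r₂ p)
    (hq₂ ▸ mem_affineLine_affineColoring r₂ q)
  obtain ⟨hslope, hoffset⟩ := Prod.mk.inj hline
  exact hr (Prod.ext_iff.2 ⟨hslope, add_right_cancel hoffset⟩)

end AffinePlane

theorem IsRectFree.comp_prodMap {α β γ α' β' γ' : Type*} {χ : α × β → γ} (hχ : IsRectFree χ)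
    {f : α' → α} {g : β' → β} {h : γ → γ'} (hf : Injective f) (hg : Injective g)
    (hh : Injective h) : IsRectFree (h ∘ χ ∘ Prod.map f g) :=
  fun _ _ _ _ hi hj ⟨e₁, e₂, e₃⟩ => hχ _ _ _ _ (hf.ne hi) (hg.ne hj) ⟨hh e₁, hh e₂, hh e₃⟩

theorem exists_isRectFree_of_card_eq (K : Type*) [Field K] [Fintype K] {q : ℕ}
    (hK : Fintype.card K = q) : ∃ χ : Fin ((q + 1) * q) × Fin (q * q) → Fin q, IsRectFree χ := by
  let rows : Fin ((q + 1) * q) ≃ Option K × K := (Fintype.equivFinOfCardEq (by simp [hK])).symm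
  let cols : Fin (q * q) ≃ K × K := (Fintype.equivFinOfCardEq (by simp [hK])).symm
  exact ⟨_, isRectFree_affineColoring.comp_prodMap rows.injective cols.injective
    (Fintype.equivFinOfCardEq hK).injective⟩

theorem stmt_16 :
    ∃ χ : Fin 30 × Fin 25 → Fin 5, IsRectFree χ := by
  have : Fact (Nat.Prime 5) := ⟨Nat.prime_five⟩
  exact exists_isRectFree_of_card_eq (ZMod 5) (ZMod.card 5)
end

section
/- For each k ∈ {2, 3, 5}, there exists a rectangle-free coloring χ : Fin (k²) × Fin (k²) → Fin k of the k²×k² grid with k colors which has the right-shift pattern on k-subgrids (with x = y = k, z = k) and in which every color occurs exactly once in the first row of every subgrid, i.e. v(c,a,b) = 1 for every color c < k and all a, b < k (equivalently, every color occurs exactly k times in every subgrid). -/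
theorem sq_cell_lt {k a i : ℕ} (ha : a < k) (hi : i < k) : a * k + i < k ^ 2 := by
  calc a * k + i < a * k + k := by omega
    _ = (a + 1) * k := by ring
    _ ≤ k * k := Nat.mul_le_mul_right k ha
    _ = k ^ 2 := (sq k).symm

theorem sq_row_lt {k a : ℕ} (ha : a < k) : a * k < k ^ 2 := by
  have := sq_cell_lt ha (Nat.lt_of_le_of_lt (Nat.zero_le a) ha); omega

/-- `χ` has the right-shift pattern on `k`-subgrids of the `k² × k²` grid
(`x = y = z = k`): within each `k × k` subgrid, row `i` is the first row of the
subgrid shifted right by `i` with wraparound, i.e.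
`χ (a*k + i, b*k + j) = χ (a*k, b*k + ((j - i) mod k))`. -/
def HasShiftPatternSq (k : ℕ) (χ : Fin (k ^ 2) × Fin (k ^ 2) → Fin k) : Prop :=
  ∀ (a b i j : ℕ) (ha : a < k) (hb : b < k) (hi : i < k) (hj : j < k),
    χ (⟨a*k + i, sq_cell_lt ha hi⟩, ⟨b*k + j, sq_cell_lt hb hj⟩) =
    χ (⟨a*k, sq_row_lt ha⟩,
       ⟨b*k + (k + j - i) % k,
        sq_cell_lt hb (Nat.mod_lt _ (Nat.lt_of_le_of_lt (Nat.zero_le i) hi))⟩)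

/-- `vcountSq k χ c a b _ _` is the number of occurrences of color `c` in the
first row of the subgrid `(a, b)` of the `k² × k²` grid. -/
def vcountSq (k : ℕ) (χ : Fin (k ^ 2) × Fin (k ^ 2) → Fin k) (c : Fin k)
    (a b : ℕ) (ha : a < k) (hb : b < k) : ℕ :=
  (Finset.univ.filter (fun j : Fin k =>
    χ (⟨a*k, sq_row_lt ha⟩, ⟨b*k + (j : ℕ), sq_cell_lt hb j.isLt⟩) = c)).card

/-- the color of cell (i,j) as an element of `ZMod k`. -/
def gcol (k : ℕ) (i j : ℕ) : ZMod k :=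
  ((i / k : ℕ) : ZMod k) * ((j / k : ℕ) : ZMod k)
    + ((j % k : ℕ) : ZMod k) - ((i % k : ℕ) : ZMod k)

lemma exists_good (k : ℕ) (hk : Nat.Prime k) :
    ∃ χ : Fin (k ^ 2) × Fin (k ^ 2) → Fin k,
      IsRectFree χ ∧ HasShiftPatternSq k χ ∧
      ∀ (c : Fin k) (a b : ℕ) (ha : a < k) (hb : b < k),
        vcountSq k χ c a b ha hb = 1 := by
  haveI : Fact (Nat.Prime k) := ⟨hk⟩
  haveI : NeZero k := ⟨hk.ne_zero⟩
  set χ : Fin (k ^ 2) × Fin (k ^ 2) → Fin k :=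
    fun p => ⟨(gcol k p.1 p.2).val, ZMod.val_lt _⟩ with hχ
  have hiff : ∀ i j i' j' : ℕ, ∀ hi hj hi' hj',
      χ (⟨i, hi⟩, ⟨j, hj⟩) = χ (⟨i', hi'⟩, ⟨j', hj'⟩) ↔ gcol k i j = gcol k i' j' := by
    intro i j i' j' hi hj hi' hj'
    simp only [hχ, Fin.mk.injEq]
    exact ⟨fun h => ZMod.val_injective k h, fun h => by rw [h]⟩
  -- helper: injectivity of Nat.cast on [0,k)
  have hcastinj : ∀ a b : ℕ, a < k → b < k → ((a : ZMod k) = (b : ZMod k)) → a = b := by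
    intro a b ha hb h
    have := congrArg ZMod.val h
    rwa [ZMod.val_cast_of_lt ha, ZMod.val_cast_of_lt hb] at this
  refine ⟨χ, ?_, ?_, ?_⟩
  · -- rectangle-free
    rintro ⟨i₁, hi₁⟩ ⟨i₂, hi₂⟩ ⟨j₁, hj₁⟩ ⟨j₂, hj₂⟩ hne₁ hne₂ ⟨h12, h21, h22⟩
    rw [hiff] at h12 h21 h22
    simp only [Fin.mk.injEq, ne_eq] at hne₁ hne₂
    set a₁ := i₁ / k; set r₁ := i₁ % k
    set a₂ := i₂ / k; set r₂ := i₂ % k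
    set b₁ := j₁ / k; set s₁ := j₁ % k
    set b₂ := j₂ / k; set s₂ := j₂ % k
    unfold gcol at h12 h21 h22
    -- (a₁ - a₂)(b₁ - b₂) = 0
    have hAB : ((a₁ : ZMod k) - a₂) * ((b₁ : ZMod k) - b₂) = 0 := by
      have hA : (a₁ : ZMod k) * b₁ + s₁ = (a₁ : ZMod k) * b₂ + s₂ := by
        have := h12; linear_combination this
      have hB : (a₂ : ZMod k) * b₁ + s₁ = (a₂ : ZMod k) * b₂ + s₂ := by
        linear_combination h22 - h21
      linear_combination hA - hB
    have hrk₁ : r₁ < k := Nat.mod_lt _ hk.pos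
    have hrk₂ : r₂ < k := Nat.mod_lt _ hk.pos
    have hsk₁ : s₁ < k := Nat.mod_lt _ hk.pos
    have hsk₂ : s₂ < k := Nat.mod_lt _ hk.pos
    rcases mul_eq_zero.mp hAB with h | h
    · have ha : (a₁ : ZMod k) = a₂ := by linear_combination h
      -- from h21 : column equality, get r₁ = r₂
      have hr : (r₁ : ZMod k) = r₂ := by linear_combination ha * (b₁ : ZMod k) - h21
      have hr' := hcastinj _ _ hrk₁ hrk₂ hr
      have hak₁ : a₁ < k := by
        have : a₁ * k ≤ i₁ := Nat.div_mul_le_self _ _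
        by_contra hc
        push_neg at hc
        have : k * k ≤ a₁ * k := Nat.mul_le_mul_right k hc
        have hi₁' : i₁ < k * k := by rw [← sq]; exact hi₁
        omega
      have hak₂ : a₂ < k := by
        have : a₂ * k ≤ i₂ := Nat.div_mul_le_self _ _
        by_contra hc
        push_neg at hc
        have : k * k ≤ a₂ * k := Nat.mul_le_mul_right k hc
        have hi₂' : i₂ < k * k := by rw [← sq]; exact hi₂
        omega
      have ha' := hcastinj _ _ hak₁ hak₂ ha
      apply hne₁
      have e1 : k * a₁ + r₁ = i₁ := Nat.div_add_mod i₁ k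
      have e2 : k * a₂ + r₂ = i₂ := Nat.div_add_mod i₂ k
      rw [← e1, ← e2, ha', hr']
    · have hb : (b₁ : ZMod k) = b₂ := by linear_combination h
      have hs : (s₁ : ZMod k) = s₂ := by linear_combination h12 - (a₁ : ZMod k) * hb
      have hs' := hcastinj _ _ hsk₁ hsk₂ hs
      have hbk₁ : b₁ < k := by
        have : b₁ * k ≤ j₁ := Nat.div_mul_le_self _ _
        by_contra hc
        push_neg at hc
        have : k * k ≤ b₁ * k := Nat.mul_le_mul_right k hc
        have hj₁' : j₁ < k * k := by rw [← sq]; exact hj₁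
        omega
      have hbk₂ : b₂ < k := by
        have : b₂ * k ≤ j₂ := Nat.div_mul_le_self _ _
        by_contra hc
        push_neg at hc
        have : k * k ≤ b₂ * k := Nat.mul_le_mul_right k hc
        have hj₂' : j₂ < k * k := by rw [← sq]; exact hj₂
        omega
      have hb' := hcastinj _ _ hbk₁ hbk₂ hb
      apply hne₂
      have e1 : k * b₁ + s₁ = j₁ := Nat.div_add_mod j₁ k
      have e2 : k * b₂ + s₂ = j₂ := Nat.div_add_mod j₂ k
      rw [← e1, ← e2, hb', hs']
  · -- shift pattern
    intro a b i j ha hb hi hj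
    rw [hiff]
    unfold gcol
    have hkpos := hk.pos
    have hd1 : (a*k + i) / k = a := by
      rw [Nat.add_comm, Nat.add_mul_div_right _ _ hkpos, Nat.div_eq_of_lt hi]; omega
    have hm1 : (a*k + i) % k = i := by
      rw [Nat.add_comm, Nat.add_mul_mod_self_right]; exact Nat.mod_eq_of_lt hi
    have hd2 : (b*k + j) / k = b := by
      rw [Nat.add_comm, Nat.add_mul_div_right _ _ hkpos, Nat.div_eq_of_lt hj]; omega
    have hm2 : (b*k + j) % k = j := by
      rw [Nat.add_comm, Nat.add_mul_mod_self_right]; exact Nat.mod_eq_of_lt hj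
    set m := (k + j - i) % k with hm
    have hmk : m < k := Nat.mod_lt _ hkpos
    have hd3 : (a*k) / k = a := Nat.mul_div_cancel _ hkpos
    have hm3 : (a*k) % k = 0 := Nat.mul_mod_left _ _
    have hd4 : (b*k + m) / k = b := by
      rw [Nat.add_comm, Nat.add_mul_div_right _ _ hkpos, Nat.div_eq_of_lt hmk]; omega
    have hm4 : (b*k + m) % k = m := by
      rw [Nat.add_comm, Nat.add_mul_mod_self_right]; exact Nat.mod_eq_of_lt hmk
    rw [hd1, hm1, hd2, hm2, hd3, hm3, hd4, hm4]
    have key : ((m : ℕ) : ZMod k) = (j : ZMod k) - i := by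
      rw [hm, ZMod.natCast_mod, Nat.cast_sub (by omega), Nat.cast_add, ZMod.natCast_self]
      ring
    rw [key]
    push_cast
    ring
  · -- counts
    intro c a b ha hb
    unfold vcountSq
    rw [Finset.card_eq_one]
    have hkpos := hk.pos
    set c' : ZMod k := ((c : ℕ) : ZMod k) with hc'
    refine ⟨⟨(c' - (a : ZMod k) * b).val, ZMod.val_lt _⟩, ?_⟩
    ext j
    simp only [Finset.mem_filter, Finset.mem_univ, true_and, Finset.mem_singleton]
    have hcond : χ (⟨a*k, sq_row_lt ha⟩, ⟨b*k + (j : ℕ), sq_cell_lt hb j.isLt⟩) = c ↔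
        gcol k (a*k) (b*k + (j : ℕ)) = c' := by
      simp only [hχ]
      constructor
      · intro h
        have hv := congrArg Fin.val h
        simp only at hv
        rw [hc', ← hv]
        exact (ZMod.natCast_rightInverse (n := k) _).symm
      · intro h
        apply Fin.ext
        simp only [h, hc', ZMod.val_cast_of_lt c.isLt]
    rw [hcond]
    have hd3 : (a*k) / k = a := Nat.mul_div_cancel _ hkpos
    have hm3 : (a*k) % k = 0 := Nat.mul_mod_left _ _
    have hd4 : (b*k + (j:ℕ)) / k = b := by
      rw [Nat.add_comm, Nat.add_mul_div_right _ _ hkpos, Nat.div_eq_of_lt j.isLt]; omega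
    have hm4 : (b*k + (j:ℕ)) % k = (j:ℕ) := by
      rw [Nat.add_comm, Nat.add_mul_mod_self_right]; exact Nat.mod_eq_of_lt j.isLt
    unfold gcol
    rw [hd3, hm3, hd4, hm4]
    constructor
    · intro h
      apply Fin.ext
      have hj' : ((j:ℕ) : ZMod k) = c' - (a : ZMod k) * b := by linear_combination h
      have := congrArg ZMod.val hj'
      rwa [ZMod.val_cast_of_lt j.isLt] at this
    · intro h
      have hj' : ((j:ℕ) : ZMod k) = c' - (a : ZMod k) * b := by
        rw [h]
        simp [ZMod.natCast_val, ZMod.cast_id]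
      linear_combination hj'

theorem stmt_18 :
    ∀ k ∈ ({2, 3, 5} : Set ℕ),
      ∃ χ : Fin (k ^ 2) × Fin (k ^ 2) → Fin k,
        IsRectFree χ ∧ HasShiftPatternSq k χ ∧
        ∀ (c : Fin k) (a b : ℕ) (ha : a < k) (hb : b < k),
          vcountSq k χ c a b ha hb = 1 := by
  intro k hk
  rcases hk with h | h | h <;> subst h
  · exact exists_good 2 (by norm_num)
  · exact exists_good 3 (by norm_num)
  · exact exists_good 5 (by norm_num)
end

section
/- Let k be a positive integer. If there exists a rectangle-free coloring χ : Fin (k²) × Fin (k²) → Fin k of the k²×k² grid with k colors which has the right-shift pattern on k-subgrids (with x = y = k, z = k) and in which every color occurs exactly once in the first row of every subgrid (v(c,a,b) = 1 for all c, a, b < k), then there exists a rectangle-free coloring of the (k² + k)×k² grid with k colors, i.e. a rectangle-free χ' : Fin (k² + k) × Fin (k²) → Fin k. -/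
/-- Injectivity of the first row of a subgrid from `vcount = 1`. -/
lemma aux_inj {k : ℕ} (χ : Fin (k ^ 2) × Fin (k ^ 2) → Fin k)
    (hv : ∀ (c : Fin k) (a b : ℕ) (ha : a < k) (hb : b < k),
      vcountSq k χ c a b ha hb = 1)
    (a b : ℕ) (ha : a < k) (hb : b < k) (j₁ j₂ : ℕ) (h₁ : j₁ < k) (h₂ : j₂ < k)
    (heq : χ (⟨a*k, sq_row_lt ha⟩, ⟨b*k + j₁, sq_cell_lt hb h₁⟩) =
           χ (⟨a*k, sq_row_lt ha⟩, ⟨b*k + j₂, sq_cell_lt hb h₂⟩)) : j₁ = j₂ := by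
  by_contra hne
  have hcard := hv (χ (⟨a*k, sq_row_lt ha⟩, ⟨b*k + j₁, sq_cell_lt hb h₁⟩)) a b ha hb
  unfold vcountSq at hcard
  have h2 : 1 < (Finset.univ.filter (fun j : Fin k =>
      χ (⟨a*k, sq_row_lt ha⟩, ⟨b*k + (j : ℕ), sq_cell_lt hb j.isLt⟩) =
      χ (⟨a*k, sq_row_lt ha⟩, ⟨b*k + j₁, sq_cell_lt hb h₁⟩))).card := by
    refine Finset.one_lt_card.mpr ⟨⟨j₁, h₁⟩, ?_, ⟨j₂, h₂⟩, ?_, ?_⟩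
    · simp only [Finset.mem_filter, Finset.mem_univ, true_and]
    · simp only [Finset.mem_filter, Finset.mem_univ, true_and]
      exact heq.symm
    · simp only [ne_eq, Fin.mk.injEq]
      exact hne
  omega

/-- The mixed case: an old row and an extra row cannot form a rectangle. -/
lemma aux_mixed {k : ℕ} (hk : 0 < k) (χ : Fin (k ^ 2) × Fin (k ^ 2) → Fin k)
    (hsp : HasShiftPatternSq k χ)
    (hv : ∀ (c : Fin k) (a b : ℕ) (ha : a < k) (hb : b < k),
      vcountSq k χ c a b ha hb = 1)
    (m s : ℕ) (hm : m < k ^ 2) (hs : s < k) (j₁ j₂ : Fin (k ^ 2)) (hj : j₁ ≠ j₂)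
    (h12 : χ (⟨m, hm⟩, j₁) = χ (⟨m, hm⟩, j₂))
    (hb : ((j₁ : ℕ) / k + s) % k = ((j₂ : ℕ) / k + s) % k) : False := by
  have hm' : m < k * k := by rw [← sq]; exact hm
  have hj₁' : (j₁ : ℕ) < k * k := by rw [← sq]; exact j₁.isLt
  have hj₂' : (j₂ : ℕ) < k * k := by rw [← sq]; exact j₂.isLt
  set a := m / k with ha_def
  set i := m % k with hi_def
  have ha : a < k := (Nat.div_lt_iff_lt_mul hk).mpr hm'
  have hi : i < k := Nat.mod_lt m hk
  set b₁ := (j₁ : ℕ) / k with hb₁_def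
  set jj₁ := (j₁ : ℕ) % k with hjj₁_def
  set b₂ := (j₂ : ℕ) / k with hb₂_def
  set jj₂ := (j₂ : ℕ) % k with hjj₂_def
  have hb₁ : b₁ < k := (Nat.div_lt_iff_lt_mul hk).mpr hj₁'
  have hb₂ : b₂ < k := (Nat.div_lt_iff_lt_mul hk).mpr hj₂'
  have hjj₁ : jj₁ < k := Nat.mod_lt _ hk
  have hjj₂ : jj₂ < k := Nat.mod_lt _ hk
  -- b₁ = b₂
  have hbeq : b₁ = b₂ := by
    have h := Nat.ModEq.add_right_cancel' (n := k) s hb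
    rwa [Nat.ModEq, Nat.mod_eq_of_lt hb₁, Nat.mod_eq_of_lt hb₂] at h
  -- value decompositions
  have hmval : a * k + i = m := by rw [Nat.mul_comm]; exact Nat.div_add_mod m k
  have hj₁val : b₁ * k + jj₁ = (j₁ : ℕ) := by rw [Nat.mul_comm]; exact Nat.div_add_mod _ k
  have hj₂val : b₂ * k + jj₂ = (j₂ : ℕ) := by rw [Nat.mul_comm]; exact Nat.div_add_mod _ k
  have hjjne : jj₁ ≠ jj₂ := by
    intro hcontra
    apply hj
    apply Fin.ext
    rw [← hj₁val, ← hj₂val, hbeq, hcontra]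
  -- rewrite with the shift pattern
  have e₁ : (⟨m, hm⟩ : Fin (k ^ 2)) = ⟨a * k + i, sq_cell_lt ha hi⟩ := Fin.ext hmval.symm
  have e₂ : j₁ = ⟨b₁ * k + jj₁, sq_cell_lt hb₁ hjj₁⟩ := Fin.ext hj₁val.symm
  have e₃ : j₂ = ⟨b₂ * k + jj₂, sq_cell_lt hb₂ hjj₂⟩ := Fin.ext hj₂val.symm
  rw [e₁, e₂, e₃, hsp a b₁ i jj₁ ha hb₁ hi hjj₁, hsp a b₂ i jj₂ ha hb₂ hi hjj₂] at h12
  have e₄ : (⟨b₂ * k + (k + jj₂ - i) % k,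
      sq_cell_lt hb₂ (Nat.mod_lt _ (Nat.lt_of_le_of_lt (Nat.zero_le i) hi))⟩ : Fin (k ^ 2)) =
      ⟨b₁ * k + (k + jj₂ - i) % k, sq_cell_lt hb₁ (Nat.mod_lt _ hk)⟩ :=
    Fin.ext (show b₂ * k + (k + jj₂ - i) % k = b₁ * k + (k + jj₂ - i) % k by rw [hbeq])
  rw [e₄] at h12
  have hmodeq := aux_inj χ hv a b₁ ha hb₁ _ _
    (Nat.mod_lt _ hk) (Nat.mod_lt _ hk) h12
  have hrw₁ : k + jj₁ - i = (k - i) + jj₁ := by omega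
  have hrw₂ : k + jj₂ - i = (k - i) + jj₂ := by omega
  rw [hrw₁, hrw₂] at hmodeq
  have h := Nat.ModEq.add_left_cancel' (n := k) (k - i) hmodeq
  rw [Nat.ModEq, Nat.mod_eq_of_lt hjj₁, Nat.mod_eq_of_lt hjj₂] at h
  exact hjjne h

theorem stmt_19 (k : ℕ) (hk : 0 < k)
    (h : ∃ χ : Fin (k ^ 2) × Fin (k ^ 2) → Fin k,
      IsRectFree χ ∧ HasShiftPatternSq k χ ∧
      ∀ (c : Fin k) (a b : ℕ) (ha : a < k) (hb : b < k),
        vcountSq k χ c a b ha hb = 1) :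
    ∃ χ' : Fin (k ^ 2 + k) × Fin (k ^ 2) → Fin k, IsRectFree χ' := by
  obtain ⟨χ, hrf, hsp, hv⟩ := h
  refine ⟨fun p => if hlt : (p.1 : ℕ) < k ^ 2 then χ (⟨p.1, hlt⟩, p.2)
    else ⟨((p.2 : ℕ) / k + ((p.1 : ℕ) - k ^ 2)) % k, Nat.mod_lt _ hk⟩, ?_⟩
  intro i₁ i₂ j₁ j₂ hi hj
  rintro ⟨h12, h13, h14⟩
  simp only at h12 h13 h14
  by_cases hc₁ : (i₁ : ℕ) < k ^ 2 <;> by_cases hc₂ : (i₂ : ℕ) < k ^ 2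
  · -- both old rows
    simp only [dif_pos hc₁, dif_pos hc₂] at h12 h13 h14
    exact hrf ⟨i₁, hc₁⟩ ⟨i₂, hc₂⟩ j₁ j₂
      (by simp only [ne_eq, Fin.mk.injEq]; exact fun hh => hi (Fin.ext hh)) hj
      ⟨h12, h13, h14⟩
  · -- i₁ old, i₂ extra
    simp only [dif_pos hc₁, dif_neg hc₂] at h12 h13 h14
    have hs : (i₂ : ℕ) - k ^ 2 < k := by have := i₂.isLt; omega
    have hbeq : ((j₁ : ℕ) / k + ((i₂ : ℕ) - k ^ 2)) % k =
        ((j₂ : ℕ) / k + ((i₂ : ℕ) - k ^ 2)) % k := by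
      have := h13.symm.trans h14
      exact congrArg Fin.val this
    exact aux_mixed hk χ hsp hv (i₁ : ℕ) _ hc₁ hs j₁ j₂ hj h12 hbeq
  · -- i₁ extra, i₂ old
    simp only [dif_neg hc₁, dif_pos hc₂] at h12 h13 h14
    have hs : (i₁ : ℕ) - k ^ 2 < k := by have := i₁.isLt; omega
    have h12' : χ (⟨(i₂ : ℕ), hc₂⟩, j₁) = χ (⟨(i₂ : ℕ), hc₂⟩, j₂) :=
      h13.symm.trans h14
    have hbeq : ((j₁ : ℕ) / k + ((i₁ : ℕ) - k ^ 2)) % k =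
        ((j₂ : ℕ) / k + ((i₁ : ℕ) - k ^ 2)) % k :=
      congrArg Fin.val h12
    exact aux_mixed hk χ hsp hv (i₂ : ℕ) _ hc₂ hs j₁ j₂ hj h12' hbeq
  · -- both extra rows
    simp only [dif_neg hc₁, dif_neg hc₂] at h12 h13 h14
    set s₁ := (i₁ : ℕ) - k ^ 2 with hs₁_def
    set s₂ := (i₂ : ℕ) - k ^ 2 with hs₂_def
    have hs₁ : s₁ < k := by have := i₁.isLt; omega
    have hs₂ : s₂ < k := by have := i₂.isLt; omega
    have hsne : s₁ ≠ s₂ := by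
      intro hcontra
      apply hi; apply Fin.ext
      have := i₁.isLt; have := i₂.isLt; omega
    have hb₁ : (j₁ : ℕ) / k < k :=
      (Nat.div_lt_iff_lt_mul hk).mpr (by rw [← sq]; exact j₁.isLt)
    have hb₂ : (j₂ : ℕ) / k < k :=
      (Nat.div_lt_iff_lt_mul hk).mpr (by rw [← sq]; exact j₂.isLt)
    -- from h12 : (b₁ + s₁) % k = (b₂ + s₁) % k, get b₁ = b₂
    have hv12 : ((j₁ : ℕ) / k + s₁) % k = ((j₂ : ℕ) / k + s₁) % k :=
      congrArg Fin.val h12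
    have hbeq : (j₁ : ℕ) / k = (j₂ : ℕ) / k := by
      have h := Nat.ModEq.add_right_cancel' (n := k) s₁ hv12
      rwa [Nat.ModEq, Nat.mod_eq_of_lt hb₁, Nat.mod_eq_of_lt hb₂] at h
    -- from h13 : (b₁ + s₁) % k = (b₁ + s₂) % k, get s₁ = s₂
    have hv13 : ((j₁ : ℕ) / k + s₁) % k = ((j₁ : ℕ) / k + s₂) % k :=
      congrArg Fin.val h13
    have h := Nat.ModEq.add_left_cancel' (n := k) ((j₁ : ℕ) / k) hv13
    rw [Nat.ModEq, Nat.mod_eq_of_lt hs₁, Nat.mod_eq_of_lt hs₂] at h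
    exact hsne h
end
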